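/- arXiv:1601.06451 — 8 statements merged into one kernel-verified Lean document; each statement's English description precedes it below -/
import Mathlib

section
/- Let C be an abelian rigid monoidal category over a field and let A be a Frobenius algebra in C that is simple as a left module over itself. Then for all objects U, V and all non-zero morphisms u : U → A and v : V → A, the composite μ ∘ (u ⊗ v) : U ⊗ V → A is non-zero, where μ is the multiplication of A. -/
/-! Left multiplication by `u`, the module map `A ⊗ U ⟶ A`, has as image a left ideal of `A`:
tensoring with an object of a rigid category is a left adjoint, hence preserves epimorphisms, so
images of module maps are submodules. The ideal is nonzero because `u` factors through it via the
unit, so by simplicity left multiplication by `u` is an epimorphism, and so is its tensor product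
with `V`. Composing the latter with left multiplication by `v` gives `a ⊗ x ⊗ y ↦ a · (u x · v y)`,
which vanishes; hence left multiplication by `v`, and with it `v`, is zero. -/

open CategoryTheory MonoidalCategory MonObj

namespace CategoryTheory

section Rigid

variable {C : Type*} [Category C] [MonoidalCategory C]

instance isLeftAdjoint_tensorLeft_of_hasLeftDual (X : C) [HasLeftDual X] :
    (tensorLeft X).IsLeftAdjoint :=
  ⟨_, ⟨tensorLeftAdjunction (ᘁX) X⟩⟩

instance isLeftAdjoint_tensorRight_of_hasRightDual (X : C) [HasRightDual X] :
    (tensorRight X).IsLeftAdjoint :=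
  ⟨_, ⟨tensorRightAdjunction X Xᘁ⟩⟩

@[simp]
theorem whiskerLeft_zero_of_hasLeftDual [Limits.HasZeroMorphisms C] (X : C) [HasLeftDual X]
    {Y Z : C} : X ◁ (0 : Y ⟶ Z) = 0 :=
  (tensorLeft X).map_zero Y Z

end Rigid

namespace MonObj

variable {C : Type*} [Category C] [MonoidalCategory C] {A : C} [MonObj A]

theorem one_whiskerRight_whiskerLeft_mul {W : C} (w : W ⟶ A) :
    η ▷ W ≫ A ◁ w ≫ μ = (λ_ W).hom ≫ w := by
  rw [← whisker_exchange_assoc, one_mul, leftUnitor_naturality]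

theorem eq_zero_of_whiskerLeft_comp_mul_eq_zero [Limits.HasZeroMorphisms C] {W : C}
    {w : W ⟶ A} (h : A ◁ w ≫ μ = 0) : w = 0 := by
  rw [← cancel_epi (λ_ W).hom, ← one_whiskerRight_whiskerLeft_mul, h]
  simp

theorem whiskerRight_comp_whiskerLeft_mul {U V : C} (u : U ⟶ A) (v : V ⟶ A) :
    (A ◁ u ≫ μ) ▷ V ≫ A ◁ v ≫ μ = (α_ A U V).hom ≫ A ◁ ((u ⊗ₘ v) ≫ μ) ≫ μ := by
  rw [MonoidalCategory.tensorHom_def]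
  simp only [comp_whiskerRight, whiskerLeft_comp, Category.assoc, ← whisker_exchange_assoc,
    mul_assoc]
  simp

end MonObj

namespace Mod

section Free

variable {C : Type*} [Category C] [MonoidalCategory C] (A : C) [MonObj A]

def free (U : C) : Mod C A :=
  letI : ModObj A (A ⊗ U) :=
    { smul := (α_ A A U).inv ≫ μ ▷ U
      one_smul := by simp [← comp_whiskerRight]
      mul_smul := by
        dsimp only [selfLeftAction_actionHomLeft, selfLeftAction_actionHomRight,
          selfLeftAction_actionAssocIso]
        rw [associator_inv_naturality_left_assoc, ← comp_whiskerRight, mul_assoc]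
        simp }
  ⟨A ⊗ U⟩

variable {A} in
def freeLift {U : C} (u : U ⟶ A) : free A U ⟶ regular A :=
  Hom.mk' (A ◁ u ≫ μ) (by
    change ((α_ A A U).inv ≫ μ ▷ U) ≫ A ◁ u ≫ μ = A ◁ (A ◁ u ≫ μ) ≫ μ
    simp [← whisker_exchange_assoc])

end Free

noncomputable section Image

open Limits

variable {C : Type*} [Category C] [Abelian C] [MonoidalCategory C] {A : C} [MonObj A]
  [(tensorLeft A).PreservesEpimorphisms] {M N : Mod C A} (f : M ⟶ N)

def imageSmul : A ⊗ Abelian.image f.hom ⟶ Abelian.image f.hom :=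
  kernel.lift (cokernel.π f.hom) (A ◁ Abelian.image.ι f.hom ≫ γ[A, N.X]) (by
    have : Epi (A ◁ Abelian.factorThruImage f.hom) := (tensorLeft A).map_epi _
    rw [← cancel_epi (A ◁ Abelian.factorThruImage f.hom), comp_zero, Category.assoc,
      ← whiskerLeft_comp_assoc, Abelian.image.fac]
    have hf : A ◁ f.hom ≫ γ[A, N.X] = γ[A, M.X] ≫ f.hom :=
      (IsModHom.smul_hom (A := A) (f := f.hom)).symm
    rw [reassoc_of% hf, cokernel.condition, comp_zero])

theorem imageSmul_ι :
    imageSmul f ≫ Abelian.image.ι f.hom = A ◁ Abelian.image.ι f.hom ≫ γ[A, N.X] :=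
  kernel.lift_ι _ _ _

def image : Mod C A :=
  letI : ModObj A (Abelian.image f.hom) :=
    { smul := imageSmul f
      one_smul := by
        rw [← cancel_mono (Abelian.image.ι f.hom)]
        dsimp only [selfLeftAction_actionHomLeft, selfLeftAction_actionUnitIso]
        rw [Category.assoc, imageSmul_ι, ← whisker_exchange_assoc, ModObj.one_smul_self,
          leftUnitor_naturality]
      mul_smul := by
        rw [← cancel_mono (Abelian.image.ι f.hom)]
        dsimp only [selfLeftAction_actionHomLeft, selfLeftAction_actionHomRight,
          selfLeftAction_actionAssocIso]
        simp only [Category.assoc, imageSmul_ι, ← whiskerLeft_comp_assoc, ← whisker_exchange_assoc]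
        simp }
  ⟨Abelian.image f.hom⟩

def imageι : image f ⟶ N :=
  Hom.mk' (Abelian.image.ι f.hom) (imageSmul_ι f)

instance : Mono (imageι f).hom :=
  inferInstanceAs (Mono (Abelian.image.ι f.hom))

theorem hom_eq_zero_of_imageι_hom_eq_zero (h : (imageι f).hom = 0) : f.hom = 0 :=
  calc f.hom = Abelian.factorThruImage f.hom ≫ (imageι f).hom := (Abelian.image.fac f.hom).symm
    _ = 0 := by rw [h]; exact comp_zero

theorem epi_hom_of_isIso_imageι_hom (h : IsIso (imageι f).hom) : Epi f.hom := by
  have : IsIso (Abelian.image.ι f.hom) := h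
  rw [← Abelian.image.fac f.hom]
  exact epi_comp _ _

end Image

end Mod

end CategoryTheory

theorem stmt5_general {C : Type*} [Category C] [Abelian C] [MonoidalCategory C]
    [RigidCategory C]
    (A : Mon C)
    (hsimple : ∀ (N : Mod C A.X) (f : N ⟶ Mod.regular A.X),
        Mono f.hom → (f.hom = 0 ∨ IsIso f.hom))
    {U V : C} (u : U ⟶ A.X) (v : V ⟶ A.X) (hu : u ≠ 0) (hv : v ≠ 0) :
    (u ⊗ₘ v) ≫ MonObj.mul (X := A.X) ≠ 0 := by
  intro huv
  let φ := Mod.freeLift u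
  rcases hsimple _ (Mod.imageι φ) inferInstance with hzero | hiso
  · exact hu (eq_zero_of_whiskerLeft_comp_mul_eq_zero
      (Mod.hom_eq_zero_of_imageι_hom_eq_zero φ hzero))
  · have : Epi (A.X ◁ u ≫ μ) := Mod.epi_hom_of_isIso_imageι_hom φ hiso
    have : Epi ((A.X ◁ u ≫ μ) ▷ V) := (tensorRight V).map_epi _
    refine hv (eq_zero_of_whiskerLeft_comp_mul_eq_zero ?_)
    rw [← cancel_epi ((A.X ◁ u ≫ μ) ▷ V), whiskerRight_comp_whiskerLeft_mul, huv]
    simp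

/-- Let `C` be an abelian rigid monoidal category and `A` a Frobenius algebra in `C`
(an algebra with `ε : A ⟶ 𝟙_C` such that `ε ∘ μ` is a non-degenerate pairing, witnessed
by a copairing `b` satisfying the snake identities) that is simple as a left module over
itself.  Then for all nonzero `u : U ⟶ A`, `v : V ⟶ A` the composite
`μ ∘ (u ⊗ v) : U ⊗ V ⟶ A` is nonzero. -/
theorem stmt5 {C : Type*} [Category C] [Abelian C] [MonoidalCategory C]
    [RigidCategory C]
    (A : Mon C) (ε : A.X ⟶ 𝟙_ C) (b : 𝟙_ C ⟶ A.X ⊗ A.X)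
    (snake₁ : (λ_ A.X).inv ≫ (b ▷ A.X) ≫ (α_ A.X A.X A.X).hom ≫
        (A.X ◁ (MonObj.mul (X := A.X) ≫ ε)) ≫ (ρ_ A.X).hom = 𝟙 A.X)
    (snake₂ : (ρ_ A.X).inv ≫ (A.X ◁ b) ≫ (α_ A.X A.X A.X).inv ≫
        ((MonObj.mul (X := A.X) ≫ ε) ▷ A.X) ≫ (λ_ A.X).hom = 𝟙 A.X)
    (hsimple : ∀ (N : Mod C A.X) (f : N ⟶ Mod.regular A.X),
        Mono f.hom → (f.hom = 0 ∨ IsIso f.hom))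
    {U V : C} (u : U ⟶ A.X) (v : V ⟶ A.X) (hu : u ≠ 0) (hv : v ≠ 0) :
    (u ⊗ₘ v) ≫ MonObj.mul (X := A.X) ≠ 0 :=
  stmt5_general A hsimple u v hu hv
end

section
/- Let C be a finite tensor category and A an algebra in C such that every simple left A-module is isomorphic to A ⊗ X for some object X of C. Then the category of left A-modules in C is a finite abelian category (every simple A-module has a projective cover and there are finitely many simples up to isomorphism). -/
open CategoryTheory MonoidalCategory

variable {C : Type*} [Category C] [MonoidalCategory C]

/-- The free left `A`-module `A ⊗ S` on an object `S`. -/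
def freeMod (A : Mon C) (S : C) : Mod C A.X where
  X := A.X ⊗ S
  mod := {
    smul := (α_ A.X A.X S).inv ≫ (MonObj.mul ▷ S)
    one_smul := by
      dsimp
      rw [associator_inv_naturality_left_assoc]
      rw [show MonObj.one ▷ A.X ▷ S ≫ MonObj.mul ▷ S = (MonObj.one ▷ A.X ≫ MonObj.mul) ▷ S from
        (comp_whiskerRight _ _ _).symm, MonObj.one_mul]
      simp
    mul_smul := by
      dsimp
      rw [associator_inv_naturality_left_assoc]
      rw [show MonObj.mul ▷ A.X ▷ S ≫ MonObj.mul ▷ S = (MonObj.mul ▷ A.X ≫ MonObj.mul) ▷ S from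
        (comp_whiskerRight _ _ _).symm, MonObj.mul_assoc]
      simp [comp_whiskerRight, whisker_assoc] }

/-- A left `A`-module is simple if it is nonzero and every mono of `A`-modules into it
is zero or an isomorphism. -/
def SimpleMod [Abelian C] (A : Mon C) (M : Mod C A.X) : Prop :=
  ¬ CategoryTheory.Limits.IsZero M.X ∧
    ∀ (N : Mod C A.X) (f : N ⟶ M), Mono f.hom → (f.hom = 0 ∨ IsIso f.hom)


/-!
Simple modules: since `𝟙_ C` is simple and `A ≠ 0`, the unit `η : 𝟙_ C ⟶ A` is mono, so for a
simple subobject `S ⊆ X` the free module `A ⊗ S` is a nonzero submodule of `A ⊗ X`; if `A ⊗ X` is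
simple it therefore equals `A ⊗ S`, and the simple modules are indexed by the finitely many simple
objects of `C`.

Projective covers: `A ⊗ -` is left adjoint to the forgetful functor, which preserves epimorphisms
because `A ⊗ -` preserves cokernels; hence `A ⊗ P ↠ A ⊗ X ≅ M` is a projective epimorphism whenever
`P ↠ X` is. If an endomorphism `u` over such an epimorphism is not epi, Fitting's lemma in the
finite-dimensional commutative algebra `k[u]` produces an idempotent `ε ≠ 1` with `uⁿ ε = uⁿ`;
splitting `ε` gives a projective summand which still maps onto `M` and has an endomorphism space
of smaller dimension. Iterating, we reach a projective epimorphism `q` all of whose endomorphisms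
`u` with `u ≫ q = q` are epi, and such a `q` is a projective cover.
-/

theorem IsArtinianRing.exists_isIdempotentElem_pow_mul_eq {R : Type*} [CommRing R]
    [IsArtinianRing R] (a : R) :
    ∃ (e c : R) (n : ℕ), IsIdempotentElem e ∧ e = a * c ∧ a ^ n * e = a ^ n := by
  obtain ⟨n, y, hy⟩ := IsArtinian.exists_pow_succ_smul_dvd a (1 : R)
  simp only [smul_eq_mul, mul_one] at hy
  have stable : ∀ j, a ^ (n + 1) * (a * y) ^ j = a ^ (n + 1) := by
    intro j
    induction j with
    | zero => simp
    | succ j ih =>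
      calc a ^ (n + 1) * (a * y) ^ (j + 1) = a ^ (n + 1) * (a * y) ^ j * y * a := by ring
        _ = a ^ (n + 1) := by rw [ih, hy, pow_succ]
  refine ⟨(a * y) ^ (n + 1), y * (a * y) ^ n, n + 1, ?_, by ring, stable _⟩
  calc (a * y) ^ (n + 1) * (a * y) ^ (n + 1)
      = a ^ (n + 1) * (a * y) ^ (n + 1) * y ^ (n + 1) := by ring
    _ = (a * y) ^ (n + 1) := by rw [stable, mul_pow]

namespace CategoryTheory

lemma End.pow_comp_eq {D : Type*} [Category D] {X Y : D} {u : End X} {f : X ⟶ Y}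
    (h : u ≫ f = f) (n : ℕ) : (u ^ n) ≫ f = f := by
  induction n with
  | zero => exact Category.id_comp f
  | succ n ih => rw [pow_succ, End.mul_def, Category.assoc, ih, h]

lemma Projective.epi_of_epi_comp {D : Type*} [Category D] {Q M N : D} [Projective Q]
    {q : Q ⟶ M} (hq : ∀ u : Q ⟶ Q, u ≫ q = q → Epi u) (g : N ⟶ Q) [Epi (g ≫ q)] : Epi g := by
  obtain ⟨h, hh⟩ := Projective.factors q (g ≫ q)
  have : Epi (h ≫ g) := hq _ (by rw [Category.assoc, hh])
  exact epi_of_epi h g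

theorem Retract.finrank_end_lt (k : Type*) [Field k] {D : Type*} [Category D] [Preadditive D]
    [Linear k D] {X Y : D} [FiniteDimensional k (Y ⟶ Y)] (h : Retract X Y)
    (hne : h.r ≫ h.i ≠ 𝟙 Y) :
    Module.finrank k (X ⟶ X) < Module.finrank k (Y ⟶ Y) := by
  let φ : (X ⟶ X) →ₗ[k] (Y ⟶ Y) := Linear.leftComp k Y h.r ∘ₗ Linear.rightComp k X h.i
  have hφ : ∀ g, φ g = h.r ≫ g ≫ h.i := fun _ => rfl
  have hinj : Function.Injective φ := fun g g' hg => by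
    simpa [hφ] using congrArg (fun f => h.i ≫ f ≫ h.r) hg
  have hid : 𝟙 Y ∉ LinearMap.range φ := by
    rintro ⟨g, hg⟩
    rw [hφ] at hg
    apply hne
    calc h.r ≫ h.i = (h.r ≫ h.i) ≫ h.r ≫ g ≫ h.i := by rw [hg, Category.comp_id]
      _ = 𝟙 Y := by rw [Category.assoc, h.retract_assoc, hg]
  rw [← LinearMap.finrank_range_of_inj hinj]
  exact Submodule.finrank_lt fun htop => hid (htop ▸ Submodule.mem_top)

end CategoryTheory

section

open CategoryTheory MonoidalCategory MonObj Limits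

namespace CategoryTheory

section Rigid

variable [RigidCategory C]

instance (X : C) : (tensorLeft X).IsLeftAdjoint := (tensorLeftAdjunction (ᘁX) X).isLeftAdjoint

instance (X : C) : (tensorLeft X).IsRightAdjoint := (tensorLeftAdjunction X (Xᘁ)).isRightAdjoint

instance (X : C) : (tensorRight X).IsRightAdjoint :=
  (tensorRightAdjunction (ᘁX) X).isRightAdjoint

instance MonoidalCategory.whiskerLeft_epi (X : C) {Y Z : C} (f : Y ⟶ Z) [Epi f] :
    Epi (X ◁ f) :=
  (tensorLeft X).map_epi f

instance MonoidalCategory.whiskerLeft_mono (X : C) {Y Z : C} (f : Y ⟶ Z) [Mono f] :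
    Mono (X ◁ f) :=
  (tensorLeft X).map_mono f

instance MonoidalCategory.whiskerRight_mono (X : C) {Y Z : C} (f : Y ⟶ Z) [Mono f] :
    Mono (f ▷ X) :=
  (tensorRight X).map_mono f

end Rigid

namespace Mod

variable {A : C} [MonObj A]

/-- The action of a module over a monoid object of `C`, typed through `⊗` rather than through the
general action `⊙ₗ`, so that the monoidal-category rewriting lemmas apply to it. -/
def act (M : Mod C A) : A ⊗ M.X ⟶ M.X := ModObj.smul (M := A) (X := M.X)

@[simp]
lemma one_act (M : Mod C A) : η[A] ▷ M.X ≫ M.act = (λ_ M.X).hom :=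
  ModObj.one_smul_self A M.X

@[simp]
lemma one_act_assoc (M : Mod C A) {Z : C} (h : M.X ⟶ Z) :
    η[A] ▷ M.X ≫ M.act ≫ h = (λ_ M.X).hom ≫ h := by
  rw [← Category.assoc, one_act]

@[simp]
lemma mul_act (M : Mod C A) : μ[A] ▷ M.X ≫ M.act = (α_ A A M.X).hom ≫ A ◁ M.act ≫ M.act :=
  ModObj.mul_smul_self A M.X

@[simp]
lemma mul_act_assoc (M : Mod C A) {Z : C} (h : M.X ⟶ Z) :
    μ[A] ▷ M.X ≫ M.act ≫ h = (α_ A A M.X).hom ≫ A ◁ M.act ≫ M.act ≫ h := by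
  rw [← Category.assoc, mul_act]
  simp only [Category.assoc]

lemma whiskerLeft_act_act (M : Mod C A) :
    A ◁ M.act ≫ M.act = (α_ A A M.X).inv ≫ μ[A] ▷ M.X ≫ M.act :=
  ModObj.mul_smul_self_flip M.X

@[simp]
lemma Hom.act_hom {M N : Mod C A} (f : M ⟶ N) : M.act ≫ f.hom = A ◁ f.hom ≫ N.act :=
  IsModHom.smul_hom (A := A) (f := f.hom)

@[simp]
lemma Hom.act_hom_assoc {M N : Mod C A} (f : M ⟶ N) {Z : C} (h : N.X ⟶ Z) :
    M.act ≫ f.hom ≫ h = A ◁ f.hom ≫ N.act ≫ h := by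
  rw [← Category.assoc, Hom.act_hom, Category.assoc]

def ofAct (X : C) (act : A ⊗ X ⟶ X) (one_act : η[A] ▷ X ≫ act = (λ_ X).hom)
    (mul_act : μ[A] ▷ X ≫ act = (α_ A A X).hom ≫ A ◁ act ≫ act) : Mod C A :=
  letI : ModObj A X := { smul := act, one_smul := one_act, mul_smul := mul_act }
  ⟨X⟩

def homMk {M N : Mod C A} (f : M.X ⟶ N.X) (h : M.act ≫ f = A ◁ f ≫ N.act) : M ⟶ N :=
  Hom.mk' f h

@[simp]
lemma homMk_hom {M N : Mod C A} (f : M.X ⟶ N.X) (h : M.act ≫ f = A ◁ f ≫ N.act) :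
    (homMk f h).hom = f := rfl

instance : (Mod.forget A : Mod C A ⥤ C).ReflectsIsomorphisms where
  reflects {M N} f (_ : IsIso f.hom) :=
    ⟨⟨homMk (inv f.hom) (by rw [← cancel_mono f.hom]; simp), by ext; simp, by ext; simp⟩⟩

instance [IsIdempotentComplete C] : IsIdempotentComplete (Mod C A) where
  idempotents_split P p hp := by
    obtain ⟨Y, i, e, hie, hei⟩ :=
      IsIdempotentComplete.idempotents_split P.X p.hom (congrArg Hom.hom hp)
    have hi : i ≫ p.hom = i := by rw [← hei, reassoc_of% hie]
    have he : p.hom ≫ e = e := by rw [← hei, Category.assoc, hie, Category.comp_id]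
    let K : Mod C A := ofAct Y (A ◁ i ≫ P.act ≫ e)
      (by
        rw [← whisker_exchange_assoc, one_act_assoc, leftUnitor_naturality_assoc,
          hie, Category.comp_id])
      (by
        simp only [whiskerLeft_comp, Category.assoc]
        rw [← whiskerLeft_comp_assoc A e i, hei, ← Hom.act_hom_assoc, he,
          ← whisker_exchange_assoc, ← associator_naturality_right_assoc, mul_act_assoc])
    refine ⟨K, homMk i ?_, homMk e ?_, by ext; exact hie, by ext; exact hei⟩
    · show (A ◁ i ≫ P.act ≫ e) ≫ i = A ◁ i ≫ P.act
      rw [Category.assoc, Category.assoc, hei, Hom.act_hom, ← whiskerLeft_comp_assoc, hi]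
    · show P.act ≫ e = A ◁ e ≫ A ◁ i ≫ P.act ≫ e
      rw [← whiskerLeft_comp_assoc, hei, ← Hom.act_hom_assoc, he]

section Cokernel

variable [Abelian C] [MonoidalPreadditive C] [RigidCategory C] {M N : Mod C A} (f : M ⟶ N)

noncomputable def cokernelAct : A ⊗ cokernel f.hom ⟶ cokernel f.hom :=
  (PreservesCokernel.iso (tensorLeft A) f.hom).hom ≫
    cokernel.desc _ (N.act ≫ cokernel.π f.hom) (by
      show A ◁ f.hom ≫ N.act ≫ cokernel.π f.hom = 0
      rw [← Hom.act_hom_assoc, cokernel.condition, comp_zero])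

lemma whiskerLeft_π_cokernelAct :
    A ◁ cokernel.π f.hom ≫ cokernelAct f = N.act ≫ cokernel.π f.hom := by
  have h : (tensorLeft A).map (cokernel.π f.hom) ≫ (PreservesCokernel.iso (tensorLeft A) f.hom).hom
      = cokernel.π ((tensorLeft A).map f.hom) := by
    rw [← Iso.eq_comp_inv, PreservesCokernel.iso_inv, π_comp_cokernelComparison]
  rw [cokernelAct, ← Category.assoc, show A ◁ cokernel.π f.hom = (tensorLeft A).map _ from rfl, h,
    cokernel.π_desc]

noncomputable def cokernelObj : Mod C A :=
  ofAct (cokernel f.hom) (cokernelAct f)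
    (by
      rw [← cancel_epi (𝟙_ C ◁ cokernel.π f.hom), whisker_exchange_assoc,
        whiskerLeft_π_cokernelAct, one_act_assoc, leftUnitor_naturality])
    (by
      rw [← cancel_epi ((A ⊗ A) ◁ cokernel.π f.hom), whisker_exchange_assoc,
        whiskerLeft_π_cokernelAct, ← Category.assoc, mul_act, associator_naturality_right_assoc,
        ← whiskerLeft_comp_assoc, whiskerLeft_π_cokernelAct]
      simp only [Category.assoc, whiskerLeft_comp_assoc, whiskerLeft_π_cokernelAct])

instance : (Mod.forget A : Mod C A ⥤ C).PreservesEpimorphisms where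
  preserves {M N} f _ := by
    let π : N ⟶ cokernelObj f := homMk (cokernel.π f.hom) (whiskerLeft_π_cokernelAct f).symm
    let z : N ⟶ cokernelObj f := homMk 0 (by simp)
    have hπ : π = z := (cancel_epi f).mp (by
      ext
      show f.hom ≫ cokernel.π f.hom = f.hom ≫ 0
      simp)
    exact Abelian.epi_of_cokernel_π_eq_zero _ (congrArg Hom.hom hπ)

end Cokernel

section Finite

variable (k : Type*) [Field k] [Preadditive C] [Linear k C] [MonoidalPreadditive C]
  [MonoidalLinear k C]

def endSubalgebra (P : Mod C A) : Subalgebra k (End P.X) where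
  carrier := {f | P.act ≫ f = A ◁ f ≫ P.act}
  mul_mem' {f g} hf hg := by
    simp only [Set.mem_ofPred_eq, End.mul_def] at *
    rw [reassoc_of% hg, hf, whiskerLeft_comp_assoc]
  add_mem' {f g} hf hg := by
    simp only [Set.mem_ofPred_eq] at *
    rw [Preadditive.comp_add, hf, hg, MonoidalPreadditive.whiskerLeft_add, Preadditive.add_comp]
  algebraMap_mem' c := by
    rw [Set.mem_ofPred_eq, Algebra.algebraMap_eq_smul_one, End.one_def, Linear.comp_smul,
      MonoidalLinear.whiskerLeft_smul, Linear.smul_comp, Category.comp_id, whiskerLeft_id,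
      Category.id_comp]

lemma mem_endSubalgebra {P : Mod C A} {f : End P.X} :
    f ∈ endSubalgebra k P ↔ P.act ≫ f = A ◁ f ≫ P.act :=
  Iff.rfl

lemma Hom.hom_mem_endSubalgebra {P : Mod C A} (u : P ⟶ P) : u.hom ∈ endSubalgebra k P :=
  u.act_hom

end Finite

open scoped IsMulCommutative in
theorem exists_idempotent_pow_comp_eq_of_not_epi (k : Type*) [Field k] [Preadditive C]
    [Linear k C] [MonoidalPreadditive C] [MonoidalLinear k C]
    [∀ X Y : C, FiniteDimensional k (X ⟶ Y)] {P : Mod C A} (u : P ⟶ P) (hu : ¬ Epi u) :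
    ∃ (ε : P ⟶ P) (n : ℕ), ε ≫ ε = ε ∧ ε ≠ 𝟙 P ∧ (End.of u ^ n) ≫ ε = End.of u ^ n := by
  let R := Algebra.adjoin k {End.of u.hom}
  have : FiniteDimensional k (End P.X) := inferInstanceAs (FiniteDimensional k (P.X ⟶ P.X))
  have : IsArtinianRing R := IsArtinianRing.of_finite k R
  let a : R := ⟨u.hom, Algebra.self_mem_adjoin_singleton k _⟩
  have hmod (x : R) : P.act ≫ x.1 = A ◁ x.1 ≫ P.act :=
    (mem_endSubalgebra k).mp <|
      Algebra.adjoin_le (Set.singleton_subset_iff.mpr (Hom.hom_mem_endSubalgebra k u)) x.2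
  obtain ⟨e, c, n, he, hec, hn⟩ := IsArtinianRing.exists_isIdempotentElem_pow_mul_eq a
  refine ⟨homMk e.1 (hmod e), n, ?_, ?_, ?_⟩
  · ext
    exact congrArg Subtype.val he
  · intro h1
    have he1 : e = 1 := Subtype.ext (congrArg Hom.hom h1)
    have hsection : homMk c.1 (hmod c) ≫ u = 𝟙 P := by
      ext
      exact congrArg Subtype.val (hec ▸ he1 : a * c = 1)
    exact hu (epi_of_epi_fac hsection)
  · ext
    have hpow : (End.of u ^ n).hom = (a : End P.X) ^ n :=
      map_pow ((Mod.forget A).mapEnd P) (End.of u) n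
    rw [comp_hom', homMk_hom, hpow]
    exact congrArg Subtype.val ((mul_comm _ _).trans hn)

theorem exists_minimal_epi_of_projective (k : Type*) [Field k] [Preadditive C] [Linear k C]
    [MonoidalPreadditive C] [MonoidalLinear k C] [∀ X Y : C, FiniteDimensional k (X ⟶ Y)]
    [IsIdempotentComplete C] {P M : Mod C A} [Projective P] (p : P ⟶ M) [Epi p] :
    ∃ (Q : Mod C A) (q : Q ⟶ M), Projective Q ∧ Epi q ∧ ∀ u : Q ⟶ Q, u ≫ q = q → Epi u := by
  induction hn : Module.finrank k (P.X ⟶ P.X) using Nat.strong_induction_on generalizing P with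
  | _ n ih =>
  by_cases hmin : ∀ u : P ⟶ P, u ≫ p = p → Epi u
  · exact ⟨P, p, inferInstance, inferInstance, hmin⟩
  push Not at hmin
  obtain ⟨u, hup, hu⟩ := hmin
  obtain ⟨ε, m, hεε, hε1, hum⟩ := exists_idempotent_pow_comp_eq_of_not_epi k u hu
  obtain ⟨K, i, r, hir, hri⟩ := IsIdempotentComplete.idempotents_split P ε hεε
  let h : Retract K P := ⟨i, r, hir⟩
  have : Projective K := h.projective
  have : Epi (i ≫ p) := epi_of_epi_fac (f := (End.of u ^ m) ≫ r) (h := p) <| by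
    rw [Category.assoc, ← Category.assoc r, hri, ← Category.assoc, hum, End.pow_comp_eq hup]
  have hlt := (h.map (Mod.forget A)).finrank_end_lt k fun h' => hε1 (by
    ext
    rw [← hri]
    exact h')
  exact ih _ (hn ▸ hlt) (i ≫ p) rfl

end Mod

end CategoryTheory

lemma freeMod_X (A : Mon C) (X : C) : (freeMod A X).X = A.X ⊗ X := rfl

lemma freeMod_act (A : Mon C) (X : C) :
    (freeMod A X).act = (α_ A.X A.X X).inv ≫ μ[A.X] ▷ X := rfl

def freeModFunctor (A : Mon C) : C ⥤ Mod C A.X where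
  obj := freeMod A
  map g := Mod.homMk (A.X ◁ g) (by
    dsimp only [freeMod_X, freeMod_act]
    rw [Category.assoc, associator_inv_naturality_right_assoc, whisker_exchange])

def freeModUnit (A : Mon C) (X : C) : X ⟶ (freeMod A X).X := (λ_ X).inv ≫ η[A.X] ▷ X

lemma whiskerLeft_freeModUnit_act (A : Mon C) (X : C) :
    A.X ◁ freeModUnit A X ≫ (freeMod A X).act = 𝟙 (freeMod A X).X := by
  show A.X ◁ ((λ_ X).inv ≫ η[A.X] ▷ X) ≫ (α_ A.X A.X X).inv ≫ μ[A.X] ▷ X = 𝟙 _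
  rw [whiskerLeft_comp, Category.assoc, associator_inv_naturality_middle_assoc,
    ← comp_whiskerRight, MonObj.mul_one]
  simp

def freeModHomEquiv (A : Mon C) (X : C) (N : Mod C A.X) : (freeMod A X ⟶ N) ≃ (X ⟶ N.X) where
  toFun f := freeModUnit A X ≫ f.hom
  invFun g := Mod.homMk (A.X ◁ g ≫ N.act) (by
    dsimp only [freeMod_X, freeMod_act]
    simp only [whiskerLeft_comp, Category.assoc]
    rw [Mod.whiskerLeft_act_act, associator_inv_naturality_right_assoc, whisker_exchange_assoc])
  left_inv f := by
    ext
    show A.X ◁ (freeModUnit A X ≫ f.hom) ≫ N.act = f.hom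
    rw [whiskerLeft_comp, Category.assoc, ← Mod.Hom.act_hom, ← Category.assoc,
      whiskerLeft_freeModUnit_act]
    exact Category.id_comp _
  right_inv g := by
    show ((λ_ X).inv ≫ η[A.X] ▷ X) ≫ A.X ◁ g ≫ N.act = g
    rw [Category.assoc, ← whisker_exchange_assoc, Mod.one_act, leftUnitor_naturality,
      Iso.inv_hom_id_assoc]

def freeModAdjunction (A : Mon C) : freeModFunctor A ⊣ Mod.forget A.X :=
  Adjunction.mkOfHomEquiv
    { homEquiv := freeModHomEquiv A
      homEquiv_naturality_left_symm {_ _ N} f g := by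
        ext
        show A.X ◁ (f ≫ g) ≫ N.act = A.X ◁ f ≫ A.X ◁ g ≫ N.act
        rw [whiskerLeft_comp]
        exact Category.assoc _ _ _
      homEquiv_naturality_right f g := (Category.assoc _ _ _).symm }

instance (A : Mon C) : (freeModFunctor A).IsLeftAdjoint := (freeModAdjunction A).isLeftAdjoint

lemma CategoryTheory.MonObj.mono_one_of_simple_unit [Preadditive C] [HasKernels C]
    [MonoidalPreadditive C] {A : C} [MonObj A] (hunit : Simple (𝟙_ C)) (hA : ¬ IsZero A) :
    Mono η[A] := by
  refine mono_of_nonzero_from_simple fun h0 => hA ?_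
  rw [IsZero.iff_id_eq_zero]
  calc 𝟙 A = (λ_ A).inv ≫ η[A] ▷ A ≫ μ[A] := by simp
    _ = 0 := by rw [h0, MonoidalPreadditive.zero_whiskerRight, zero_comp, comp_zero]

lemma SimpleMod.exists_iso_freeMod_simple [Abelian C] [MonoidalPreadditive C] [RigidCategory C]
    (hunit : Simple (𝟙_ C))
    (hss : ∀ X : C, ¬ IsZero X → ∃ (S : C) (i : S ⟶ X), Simple S ∧ Mono i)
    {A : Mon C} {M : Mod C A.X} (hM : SimpleMod A M) {X : C} (e : M ≅ freeMod A X) :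
    ∃ S : C, Simple S ∧ Nonempty (M ≅ freeMod A S) := by
  have hA : ¬ IsZero A.X := fun h =>
    hM.1 (((tensorRight X).map_isZero h).of_iso ((Mod.forget A.X).mapIso e))
  have hX : ¬ IsZero X := fun h =>
    hM.1 (((tensorLeft A.X).map_isZero h).of_iso ((Mod.forget A.X).mapIso e))
  obtain ⟨S, i, hS, hi⟩ := hss X hX
  have : Mono η[A.X] := MonObj.mono_one_of_simple_unit hunit hA
  have : Mono (freeModUnit A S) := inferInstanceAs (Mono ((λ_ S).inv ≫ η[A.X] ▷ S))
  let g : freeMod A S ⟶ M := (freeModFunctor A).map i ≫ e.inv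
  have hg : Mono g.hom := mono_comp' (inferInstanceAs (Mono (A.X ◁ i)))
    (inferInstanceAs (Mono ((Mod.forget A.X).mapIso e).inv))
  rcases hM.2 _ g hg with hg0 | hg
  · exact absurd ((IsZero.of_mono_eq_zero g.hom hg0).of_mono (freeModUnit A S)) hS.not_isZero
  · have : IsIso ((Mod.forget A.X).map g) := hg
    have : IsIso g := isIso_of_reflects_iso g (Mod.forget A.X)
    exact ⟨S, hS, ⟨(asIso g).symm⟩⟩

end

/-- Let `C` be a finite tensor category (abelian, `k`-linear monoidal, rigid, with
finite-dimensional Homs, finitely many simples, simple subobjects of nonzero objects,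
and projective covers), and let `A` be an algebra in `C` such that every simple left
`A`-module is isomorphic to a free module `A ⊗ X`.  Then the category of left
`A`-modules is finite: every simple `A`-module has a projective cover, and there are
finitely many simple `A`-modules up to isomorphism. -/
theorem stmt7 {k : Type*} [Field k] [IsAlgClosed k]
    {C : Type*} [Category C] [Abelian C] [Linear k C] [MonoidalCategory C]
    [RigidCategory C] [MonoidalPreadditive C] [MonoidalLinear k C]
    [∀ X Y : C, FiniteDimensional k (X ⟶ Y)]
    (hsimpleUnit : Simple (𝟙_ C))
    (hss : ∀ X : C, ¬ CategoryTheory.Limits.IsZero X →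
      ∃ (S : C) (i : S ⟶ X), Simple S ∧ Mono i)
    (hfinC : ∃ (ι : Type) (_ : Finite ι) (rep : ι → C),
      ∀ S : C, Simple S → ∃ i, Nonempty (S ≅ rep i))
    (hprojC : ∀ X : C, ∃ (P : C), Projective P ∧ ∃ e : P ⟶ X, Epi e)
    (A : Mon C)
    (hA : ∀ M : Mod C A.X, SimpleMod A M → ∃ X : C, Nonempty (M ≅ freeMod A X)) :
    (∀ M : Mod C A.X, SimpleMod A M →
      ∃ (P : Mod C A.X), Projective P ∧ ∃ e : P ⟶ M, Epi e ∧
        ∀ (N : Mod C A.X) (g : N ⟶ P), Epi (g ≫ e) → Epi g) ∧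
    (∃ (ι : Type) (_ : Finite ι) (rep : ι → Mod C A.X),
      ∀ M : Mod C A.X, SimpleMod A M → ∃ i, Nonempty (M ≅ rep i)) := by
  refine ⟨fun M hM => ?_, ?_⟩
  · obtain ⟨X, ⟨e⟩⟩ := hA M hM
    obtain ⟨Q, hQ, q, hq⟩ := hprojC X
    have : Projective ((freeModFunctor A).obj Q) := (freeModAdjunction A).map_projective Q hQ
    have : Epi ((freeModFunctor A).map q ≫ e.inv) :=
      epi_comp' inferInstance (IsIso.epi_of_iso e.inv)
    obtain ⟨P, p, hP, hp, hmin⟩ :=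
      Mod.exists_minimal_epi_of_projective k ((freeModFunctor A).map q ≫ e.inv)
    exact ⟨P, hP, p, hp, fun N g _ => Projective.epi_of_epi_comp hmin g⟩
  · obtain ⟨ι, hι, rep, hrep⟩ := hfinC
    refine ⟨ι, hι, fun j => freeMod A (rep j), fun M hM => ?_⟩
    obtain ⟨X, ⟨e⟩⟩ := hA M hM
    obtain ⟨S, hS, ⟨e'⟩⟩ := hM.exists_iso_freeMod_simple hsimpleUnit hss e
    obtain ⟨j, ⟨f⟩⟩ := hrep S hS
    exact ⟨j, ⟨e' ≪≫ (freeModFunctor A).mapIso f⟩⟩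
end

section
/- In the mode algebra with generators a_m (m ∈ ℤ) for a in a symplectic vector space, define for x > 0 the operators ξ^{1/2}(a_m) = Σ_{k≥0} binom(1/2, k) x^{1/2−k} a_{m+k}. Then [ξ^{1/2}(a_m), ξ^{1/2}(b_n)] = (a,b)·x^{m+n+1}·( m·δ_{m+n,0} + (m+1/2)·δ_{m+n+1,0} )·K, i.e., the combinatorial identity Σ_{k,l≥0} binom(1/2,k) binom(1/2,l) (m+k) δ_{m+n+k+l,0} = m·δ_{m+n,0} + (m+1/2)·δ_{m+n+1,0} holds for all integers m, n. -/
/-!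
With `N = -(m + n)`, the Kronecker delta cuts the double sum down to the finite sum of
`binom(1/2, k) binom(1/2, l) (m + k)` over `k + l = N`. By Chu–Vandermonde the unweighted sum is
`binom(1, N)`, and by the symmetry `k ↔ l` the weight `k` averages to `N / 2`. The sum is
therefore `(m + N / 2) binom(1, N)`, which vanishes unless `N = 0` or `N = 1`.
-/

/-- The generalized binomial coefficient `binom(x, k) = x(x−1)⋯(x−k+1)/k!`. -/
noncomputable def gbinom (x : ℝ) (k : ℕ) : ℝ :=
  (∏ i ∈ Finset.range k, (x - i)) / (Nat.factorial k)

open Finset Polynomial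

theorem descPochhammer_smeval_eq_prod_range {R : Type*} [CommRing R] (r : R) (k : ℕ) :
    (descPochhammer ℤ k).smeval r = ∏ i ∈ range k, (r - i) := by
  rw [← descPochhammer_eval_eq_prod_range, ← descPochhammer_map (Int.castRingHom R), eval_map,
    ← eval₂_smulOneHom_eq_smeval, Subsingleton.elim (Int.castRingHom R) RingHom.smulOneHom]

theorem gbinom_eq_choose (x : ℝ) (k : ℕ) : gbinom x k = Ring.choose x k := by
  rw [Ring.choose_eq_smul, descPochhammer_smeval_eq_prod_range, gbinom, smul_eq_mul,
    inv_mul_eq_div]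

theorem two_mul_sum_antidiagonal_mul_choose_mul_choose {R : Type*} [CommRing R] [BinomialRing R]
    (r : R) (N : ℕ) :
    2 * ∑ p ∈ antidiagonal N, (p.1 : R) * (Ring.choose r p.1 * Ring.choose r p.2) =
      N * Ring.choose (r + r) N := by
  set g : ℕ × ℕ → R := fun p ↦ Ring.choose r p.1 * Ring.choose r p.2
  have hswap : ∑ p ∈ antidiagonal N, (p.1 : R) * g p = ∑ p ∈ antidiagonal N, (p.2 : R) * g p := by
    rw [← Nat.sum_antidiagonal_swap]
    exact sum_congr rfl fun p _ ↦ by simp only [g, Prod.fst_swap, Prod.snd_swap]; ring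
  calc 2 * ∑ p ∈ antidiagonal N, (p.1 : R) * g p
      = ∑ p ∈ antidiagonal N, ((p.1 + p.2 : ℕ) : R) * g p := by
        rw [two_mul]
        nth_rewrite 2 [hswap]
        simp only [← sum_add_distrib, ← add_mul, Nat.cast_add]
    _ = N * Ring.choose (r + r) N := by
        rw [Ring.add_choose_eq N (Commute.refl r), mul_sum]
        exact sum_congr rfl fun p hp ↦ by rw [mem_antidiagonal.mp hp]

theorem sum_antidiagonal_choose_half_mul_choose_half (x : ℝ) (N : ℕ) :
    ∑ p ∈ antidiagonal N, Ring.choose (1 / 2 : ℝ) p.1 * Ring.choose (1 / 2 : ℝ) p.2 * (x + p.1) =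
      (x + N / 2) * Nat.choose 1 N := by
  have hweighted := two_mul_sum_antidiagonal_mul_choose_mul_choose (1 / 2 : ℝ) N
  have hplain := Ring.add_choose_eq N (Commute.refl (1 / 2 : ℝ))
  have hone : Ring.choose (1 : ℝ) N = Nat.choose 1 N := by
    simpa using Ring.choose_natCast (R := ℝ) 1 N
  rw [add_halves, hone] at hweighted hplain
  have hsplit : ∑ p ∈ antidiagonal N,
      Ring.choose (1 / 2 : ℝ) p.1 * Ring.choose (1 / 2 : ℝ) p.2 * (x + p.1) =
      x * ∑ p ∈ antidiagonal N, Ring.choose (1 / 2 : ℝ) p.1 * Ring.choose (1 / 2 : ℝ) p.2 +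
        ∑ p ∈ antidiagonal N, (p.1 : ℝ) * (Ring.choose (1 / 2) p.1 * Ring.choose (1 / 2) p.2) := by
    rw [mul_sum, ← sum_add_distrib]
    exact sum_congr rfl fun _ _ ↦ by ring
  rw [hsplit, ← hplain]
  linear_combination hweighted / 2

theorem tsum_tsum_mul_ite_eq_sum_antidiagonal {α : Type*} [NonAssocSemiring α] [TopologicalSpace α]
    (f : ℕ → ℕ → α) {s : ℤ} {N : ℕ} (hs : s = -N) :
    ∑' k : ℕ, ∑' l : ℕ, f k l * (if s + k + l = 0 then 1 else 0) =
      ∑ p ∈ antidiagonal N, f p.1 p.2 := by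
  have hinner : ∀ k : ℕ, ∑' l : ℕ, f k l * (if s + k + l = 0 then 1 else 0) =
      f k (N - k) * (if s + k + (N - k : ℕ) = 0 then 1 else 0) := fun k ↦
    tsum_eq_single (N - k) fun l hl ↦ by rw [if_neg (by omega), mul_zero]
  rw [tsum_congr hinner, tsum_eq_sum (s := range (N + 1)) fun k hk ↦ by
      rw [mem_range] at hk; rw [if_neg (by omega), mul_zero],
    Nat.sum_antidiagonal_eq_sum_range_succ_mk]
  exact sum_congr rfl fun k hk ↦ by rw [mem_range] at hk; rw [if_pos (by omega), mul_one]

theorem tsum_tsum_mul_ite_eq_zero {α : Type*} [NonAssocSemiring α] [TopologicalSpace α]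
    (f : ℕ → ℕ → α) {s : ℤ} (hs : 0 < s) :
    ∑' k : ℕ, ∑' l : ℕ, f k l * (if s + k + l = 0 then 1 else 0) = 0 := by
  simp only [show ∀ k l : ℕ, s + k + l ≠ 0 by omega, if_false, mul_zero, tsum_zero]

/-- The combinatorial identity underlying
`[ξ^{1/2}(a_m), ξ^{1/2}(b_n)] = (a,b)·x^{m+n+1}·(m·δ_{m+n,0} + (m+1/2)·δ_{m+n+1,0})·K`:
for all integers `m, n`,
`Σ_{k,l≥0} binom(1/2,k)·binom(1/2,l)·(m+k)·δ_{m+n+k+l,0}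
  = m·δ_{m+n,0} + (m+1/2)·δ_{m+n+1,0}`. -/
theorem stmt10 (m n : ℤ) :
    (∑' k : ℕ, ∑' l : ℕ,
        gbinom (1 / 2) k * gbinom (1 / 2) l * ((m : ℝ) + k) *
          (if m + n + k + l = 0 then (1 : ℝ) else 0))
      = (m : ℝ) * (if m + n = 0 then 1 else 0) +
        ((m : ℝ) + 1 / 2) * (if m + n + 1 = 0 then 1 else 0) := by
  obtain ⟨N, hN⟩ | hpos : (∃ N : ℕ, m + n = -N) ∨ 0 < m + n := by
    rcases le_or_gt (m + n) 0 with h | h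
    · exact Or.inl ⟨(-(m + n)).toNat, by omega⟩
    · exact Or.inr h
  · rw [tsum_tsum_mul_ite_eq_sum_antidiagonal
      (fun k l ↦ gbinom (1 / 2) k * gbinom (1 / 2) l * ((m : ℝ) + k)) hN]
    simp only [gbinom_eq_choose]
    rw [sum_antidiagonal_choose_half_mul_choose_half, hN]
    rcases N with _ | _ | N
    · simp
    · norm_num
    · rw [Nat.choose_eq_zero_of_lt (by omega), if_neg (by omega), if_neg (by omega)]
      simp
  · rw [tsum_tsum_mul_ite_eq_zero _ hpos, if_neg (by omega), if_neg (by omega)]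
    ring
end

section
/- For all integers m, n, the identity Σ_{k,l≥0} binom(m,k)·binom(n,l)·(m + 1/2 − k)·δ_{m+n+1−k−l, 0} = −m·δ_{m+n,0} + (m + 1/2)·δ_{m+n+1,0} holds, where binom(m,k) is the generalized binomial coefficient (possibly with negative m, n) and the sum is over non-negative integers k, l with only finitely many nonzero terms contributing. -/
open Finset Polynomial

lemma descPochhammer_eval_prod (x : ℝ) (k : ℕ) :
    (descPochhammer ℝ k).eval x = ∏ i ∈ Finset.range k, (x - i) := by
  induction k with
  | zero => simp
  | succ k ih =>
    rw [descPochhammer_succ_right, eval_mul, ih, prod_range_succ]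
    simp

lemma gbinom_eval (x : ℝ) (k : ℕ) :
    gbinom x k = (descPochhammer ℝ k).eval x / k.factorial := by
  rw [gbinom, descPochhammer_eval_prod]

lemma gbinom_nat (a k : ℕ) : gbinom (a : ℝ) k = (a.choose k : ℝ) := by
  rw [gbinom_eval, descPochhammer_eval_eq_descFactorial,
    Nat.descFactorial_eq_factorial_mul_choose]
  push_cast
  rw [mul_comm, mul_div_assoc, div_self (by exact_mod_cast k.factorial_ne_zero), mul_one]

lemma vdm0 (a b N : ℕ) :
    ∑ k ∈ range (N + 1), gbinom (a : ℝ) k * gbinom (b : ℝ) (N - k)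
      = gbinom ((a : ℝ) + (b : ℝ)) N := by
  have h := Nat.add_choose_eq a b N
  rw [Finset.Nat.sum_antidiagonal_eq_sum_range_succ_mk] at h
  calc ∑ k ∈ range (N + 1), gbinom (a : ℝ) k * gbinom (b : ℝ) (N - k)
      = ((∑ k ∈ range (N + 1), a.choose k * b.choose (N - k) : ℕ) : ℝ) := by
        push_cast
        exact Finset.sum_congr rfl fun k _ => by rw [gbinom_nat, gbinom_nat]
    _ = (((a + b).choose N : ℕ) : ℝ) := by rw [← h]
    _ = gbinom ((a : ℝ) + (b : ℝ)) N := by rw [← gbinom_nat, Nat.cast_add]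

lemma vdm1 (b N : ℕ) (x : ℝ) :
    ∑ k ∈ range (N + 1), gbinom x k * gbinom (b : ℝ) (N - k) = gbinom (x + b) N := by
  set p : ℝ[X] := ∑ k ∈ range (N + 1),
    C (gbinom (b : ℝ) (N - k) * ((k.factorial : ℝ))⁻¹) * descPochhammer ℝ k with hpdef
  set q : ℝ[X] := C ((N.factorial : ℝ))⁻¹ * (descPochhammer ℝ N).comp (X + C (b : ℝ)) with hqdef
  have hp : ∀ y : ℝ, p.eval y = ∑ k ∈ range (N + 1), gbinom y k * gbinom (b : ℝ) (N - k) := by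
    intro y
    rw [hpdef, eval_finset_sum]
    refine Finset.sum_congr rfl fun k _ => ?_
    simp only [eval_mul, eval_C, gbinom_eval, div_eq_mul_inv]
    ring
  have hq : ∀ y : ℝ, q.eval y = gbinom (y + b) N := by
    intro y
    rw [hqdef, eval_mul, eval_C, eval_comp, eval_add, eval_X, eval_C, gbinom_eval]
    ring
  have hpq : p = q := by
    apply Polynomial.eq_of_infinite_eval_eq
    have hsub : Set.range ((↑) : ℕ → ℝ) ⊆ {x | eval x p = eval x q} := by
      rintro _ ⟨a, rfl⟩
      simp only [Set.mem_setOf_eq, hp, hq]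
      exact vdm0 a b N
    exact ((Set.infinite_range_of_injective Nat.cast_injective).mono hsub)
  have := congrArg (eval x) hpq
  rwa [hp, hq] at this

lemma vdm (x y : ℝ) (N : ℕ) :
    ∑ k ∈ range (N + 1), gbinom x k * gbinom y (N - k) = gbinom (x + y) N := by
  set p : ℝ[X] := ∑ k ∈ range (N + 1),
    C (gbinom x k * (((N - k).factorial : ℝ))⁻¹) * descPochhammer ℝ (N - k) with hpdef
  set q : ℝ[X] := C ((N.factorial : ℝ))⁻¹ * (descPochhammer ℝ N).comp (X + C x) with hqdef
  have hp : ∀ z : ℝ, p.eval z = ∑ k ∈ range (N + 1), gbinom x k * gbinom z (N - k) := by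
    intro z
    rw [hpdef, eval_finset_sum]
    refine Finset.sum_congr rfl fun k _ => ?_
    simp only [eval_mul, eval_C, gbinom_eval, div_eq_mul_inv]
    ring
  have hq : ∀ z : ℝ, q.eval z = gbinom (x + z) N := by
    intro z
    rw [hqdef, eval_mul, eval_C, eval_comp, eval_add, eval_X, eval_C, gbinom_eval]
    ring
  have hpq : p = q := by
    apply Polynomial.eq_of_infinite_eval_eq
    have hsub : Set.range ((↑) : ℕ → ℝ) ⊆ {z | eval z p = eval z q} := by
      rintro _ ⟨b, rfl⟩
      simp only [Set.mem_setOf_eq, hp, hq]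
      exact vdm1 b N x
    exact ((Set.infinite_range_of_injective Nat.cast_injective).mono hsub)
  have := congrArg (eval y) hpq
  rwa [hp, hq] at this

lemma gbinom_weight (x : ℝ) (k : ℕ) :
    ((k : ℝ) + 1) * gbinom x (k + 1) = x * gbinom (x - 1) k := by
  rw [gbinom, gbinom, Finset.prod_range_succ']
  have hprod : (∏ i ∈ range k, (x - ((i : ℕ) + 1 : ℕ))) = ∏ i ∈ range k, (x - 1 - i) :=
    Finset.prod_congr rfl fun i _ => by push_cast; ring
  rw [hprod, Nat.factorial_succ]
  have hk : ((k : ℝ) + 1) ≠ 0 := by positivity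
  have hf : ((k.factorial : ℝ)) ≠ 0 := by exact_mod_cast k.factorial_ne_zero
  push_cast
  field_simp
  ring

lemma sum_weight (x y : ℝ) (N : ℕ) :
    ∑ k ∈ range (N + 2), (k : ℝ) * (gbinom x k * gbinom y (N + 1 - k))
      = x * gbinom (x - 1 + y) N := by
  rw [Finset.sum_range_succ']
  simp only [Nat.cast_zero, zero_mul, add_zero]
  rw [← vdm (x - 1) y N, Finset.mul_sum]
  refine Finset.sum_congr rfl fun j _ => ?_
  have h1 : N + 1 - (j + 1) = N - j := by omega
  rw [h1]
  push_cast
  rw [← mul_assoc, gbinom_weight, mul_assoc]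

lemma gbinom_zero_of {N : ℕ} (x : ℝ) (j : ℕ) (hj : j < N) (h : x = (j : ℝ)) :
    gbinom x N = 0 := by
  rw [gbinom, Finset.prod_eq_zero (Finset.mem_range.2 hj) (by rw [h, sub_self]), zero_div]

lemma gbinom_zero' (x : ℝ) : gbinom x 0 = 1 := by simp [gbinom]

/-- For all integers `m, n`,
`Σ_{k,l≥0} binom(m,k)·binom(n,l)·(m + 1/2 − k)·δ_{m+n+1−k−l,0}
  = −m·δ_{m+n,0} + (m + 1/2)·δ_{m+n+1,0}`,
where `binom` is the generalized binomial coefficient (possibly with negative `m, n`). -/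
theorem stmt11 (m n : ℤ) :
    (∑' k : ℕ, ∑' l : ℕ,
        gbinom (m : ℝ) k * gbinom (n : ℝ) l * ((m : ℝ) + 1 / 2 - k) *
          (if m + n + 1 - k - l = 0 then (1 : ℝ) else 0))
      = -(m : ℝ) * (if m + n = 0 then 1 else 0) +
        ((m : ℝ) + 1 / 2) * (if m + n + 1 = 0 then 1 else 0) := by
  by_cases hneg : m + n + 1 < 0
  · have h1 : ∀ k l : ℕ,
        gbinom (m : ℝ) k * gbinom (n : ℝ) l * ((m : ℝ) + 1 / 2 - k) *
          (if m + n + 1 - k - l = 0 then (1 : ℝ) else 0) = 0 := by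
      intro k l
      rw [if_neg (by omega), mul_zero]
    simp only [h1, tsum_zero]
    rw [if_neg (by omega), if_neg (by omega)]
    ring
  · push_neg at hneg
    obtain ⟨N, hN⟩ : ∃ N : ℕ, m + n + 1 = N := ⟨(m + n + 1).toNat, by omega⟩
    have hinner : ∀ k : ℕ,
        (∑' l : ℕ, gbinom (m : ℝ) k * gbinom (n : ℝ) l * ((m : ℝ) + 1 / 2 - k) *
          (if m + n + 1 - k - l = 0 then (1 : ℝ) else 0))
        = if k ≤ N then gbinom (m : ℝ) k * gbinom (n : ℝ) (N - k) * ((m : ℝ) + 1 / 2 - k)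
          else 0 := by
      intro k
      by_cases hk : k ≤ N
      · rw [if_pos hk, tsum_eq_single (N - k) ?_, if_pos (by omega), mul_one]
        intro l hl
        rw [if_neg (by omega), mul_zero]
      · rw [if_neg hk]
        have h0 : ∀ l : ℕ, gbinom (m : ℝ) k * gbinom (n : ℝ) l * ((m : ℝ) + 1 / 2 - k) *
            (if m + n + 1 - k - l = 0 then (1 : ℝ) else 0) = 0 := by
          intro l
          rw [if_neg (by omega), mul_zero]
        rw [tsum_congr h0, tsum_zero]
    rw [tsum_congr hinner, tsum_eq_sum (s := Finset.range (N + 1))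
      (fun k hk => if_neg (by simp only [Finset.mem_range] at hk; omega))]
    have hsum : ∑ k ∈ Finset.range (N + 1),
        (if k ≤ N then gbinom (m : ℝ) k * gbinom (n : ℝ) (N - k) * ((m : ℝ) + 1 / 2 - k) else 0)
        = ((m : ℝ) + 1 / 2) * ∑ k ∈ Finset.range (N + 1),
            gbinom (m : ℝ) k * gbinom (n : ℝ) (N - k)
          - ∑ k ∈ Finset.range (N + 1),
            (k : ℝ) * (gbinom (m : ℝ) k * gbinom (n : ℝ) (N - k)) := by
      rw [Finset.mul_sum, ← Finset.sum_sub_distrib]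
      refine Finset.sum_congr rfl fun k hk => ?_
      rw [if_pos (by simp only [Finset.mem_range] at hk; omega)]
      ring
    rw [hsum, vdm]
    have hmn : (m : ℝ) + (n : ℝ) = (N : ℝ) - 1 := by
      have := congrArg (Int.cast : ℤ → ℝ) hN
      push_cast at this
      linarith
    rcases N with _ | N'
    · -- N = 0
      rw [Finset.sum_range_one, gbinom_zero', if_neg (by omega), if_pos (by omega)]
      norm_num
    · rw [sum_weight]
      rcases N' with _ | N''
      · -- N = 1
        have h1 : gbinom ((m : ℝ) + (n : ℝ)) 1 = 0 := by
          apply gbinom_zero_of _ 0 (by norm_num)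
          rw [hmn]; norm_num
        have h2 : gbinom ((m : ℝ) - 1 + (n : ℝ)) 0 = 1 := gbinom_zero' _
        rw [h1, h2, if_pos (by omega), if_neg (by omega)]
        ring
      · -- N ≥ 2
        have h1 : gbinom ((m : ℝ) + (n : ℝ)) (N'' + 2) = 0 := by
          apply gbinom_zero_of _ (N'' + 1) (by omega)
          rw [hmn]; push_cast; ring
        have h2 : gbinom ((m : ℝ) - 1 + (n : ℝ)) (N'' + 1) = 0 := by
          apply gbinom_zero_of _ N'' (by omega)
          rw [show (m : ℝ) - 1 + (n : ℝ) = (m : ℝ) + (n : ℝ) - 1 by ring, hmn]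
          push_cast; ring
        rw [h1, h2, if_neg (by omega), if_neg (by omega)]
        ring
end

section
/- Let h be a d-dimensional complex symplectic vector space, d = 2r, with symplectic basis a_1,...,a_d, and let b_1,...,b_d be the dual basis in the sense (a_i, b_j)_{SF} = δ_{ij}, given by b_k = a_{k+d/2} for k ≤ d/2 and b_k = −a_{k−d/2} for k > d/2, and let Ĉ = Σ_i b_i a_i in the exterior algebra Λ(h). Then Ĉ^{d/2} = (−1)^{d(d+2)/8} · 2^{d/2} · (d/2)! · a_1 a_2 ⋯ a_d. -/
section helpers

variable {R : Type*} [Ring R]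

lemma aux_sum_pow_zero (c : ℕ → R) (hc : ∀ i j, Commute (c i) (c j))
    (hsq : ∀ i, c i * c i = 0) :
    ∀ n m, n < m → (∑ k ∈ Finset.range n, c k) ^ m = 0 := by
  intro n
  induction n with
  | zero => intro m hm; simp [zero_pow (by omega : m ≠ 0)]
  | succ n ih =>
    intro m hm
    rw [Finset.sum_range_succ,
      Commute.add_pow (Commute.sum_left _ _ _ fun i _ => hc i n)]
    apply Finset.sum_eq_zero
    intro k hk
    simp only [Finset.mem_range] at hk
    by_cases h2 : 2 ≤ m - k
    · have : c n ^ (m - k) = 0 :=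
        pow_eq_zero_of_le h2 (by rw [pow_two]; exact hsq n)
      simp [this]
    · rw [ih k (by omega)]; simp

lemma aux_sum_pow_card (c : ℕ → R) (hc : ∀ i j, Commute (c i) (c j))
    (hsq : ∀ i, c i * c i = 0) (n : ℕ) :
    (∑ k ∈ Finset.range n, c k) ^ n =
      n.factorial • ((List.range n).map c).prod := by
  induction n with
  | zero => simp
  | succ n ih =>
    rw [Finset.sum_range_succ,
      Commute.add_pow (Commute.sum_left _ _ _ fun i _ => hc i n)]
    rw [Finset.sum_range_succ, Finset.sum_range_succ]
    have h0 : (∑ k ∈ Finset.range n,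
        (∑ k ∈ Finset.range n, c k) ^ k * c n ^ (n + 1 - k) * ((n+1).choose k : R)) = 0 := by
      apply Finset.sum_eq_zero
      intro k hk
      simp only [Finset.mem_range] at hk
      have : c n ^ (n + 1 - k) = 0 :=
        pow_eq_zero_of_le (show 2 ≤ n + 1 - k by omega) (by rw [pow_two]; exact hsq n)
      simp [this]
    rw [h0, aux_sum_pow_zero c hc hsq n (n+1) (by omega), ih]
    simp only [zero_add, zero_mul, add_zero, pow_one, Nat.choose_succ_self_right,
      Nat.choose_self, Nat.cast_one, mul_one]
    rw [List.range_succ, List.map_append, List.prod_append]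
    simp only [List.map_cons, List.map_nil, List.prod_cons, List.prod_nil, mul_one]
    rw [smul_mul_assoc, ← (Nat.cast_commute (n+1) _).eq, ← nsmul_eq_mul, smul_smul]
    rw [Nat.factorial_succ]
    congr 2
    simp

open ExteriorAlgebra

variable {h : Type*} [AddCommGroup h] [Module ℂ h]

lemma aux_anticomm (x y : h) : ι ℂ x * ι ℂ y = -(ι ℂ y * ι ℂ x) :=
  eq_neg_of_add_eq_zero_left (ι_add_mul_swap x y)

lemma aux_mul_mul_comm (x y z : h) :
    ι ℂ z * (ι ℂ x * ι ℂ y) = (ι ℂ x * ι ℂ y) * ι ℂ z := by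
  rw [← mul_assoc, aux_anticomm z x, neg_mul, mul_assoc, aux_anticomm z y, mul_neg, neg_neg,
    mul_assoc]

lemma aux_commute (x y z w : h) : Commute (ι ℂ x * ι ℂ y) (ι ℂ z * ι ℂ w) := by
  show _ = _
  rw [← mul_assoc, ← aux_mul_mul_comm x y z, mul_assoc, ← aux_mul_mul_comm x y w, ← mul_assoc]

lemma aux_sq (x y : h) : (ι ℂ x * ι ℂ y) * (ι ℂ x * ι ℂ y) = 0 := by
  rw [← mul_assoc, ← aux_mul_mul_comm x y x, ← mul_assoc, ι_sq_zero, zero_mul, zero_mul]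

lemma aux_prod_mul (x : h) (L : List (ExteriorAlgebra ℂ h))
    (hL : ∀ u ∈ L, ∃ y, u = ι ℂ y) :
    L.prod * ι ℂ x = ((-1 : ℂ) ^ L.length) • (ι ℂ x * L.prod) := by
  induction L with
  | nil => simp
  | cons u t ih =>
    obtain ⟨y, rfl⟩ := hL u List.mem_cons_self
    rw [List.prod_cons, mul_assoc, ih (fun v hv => hL v (List.mem_cons_of_mem _ hv)),
      mul_smul_comm, ← mul_assoc, aux_anticomm y x, neg_mul, smul_neg,
      List.length_cons, pow_succ, mul_neg_one, neg_smul, mul_assoc]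

lemma aux_prod_prod (L₁ L₂ : List (ExteriorAlgebra ℂ h))
    (h₁ : ∀ u ∈ L₁, ∃ y, u = ι ℂ y) (h₂ : ∀ u ∈ L₂, ∃ y, u = ι ℂ y) :
    L₁.prod * L₂.prod = ((-1 : ℂ) ^ (L₁.length * L₂.length)) • (L₂.prod * L₁.prod) := by
  induction L₂ with
  | nil => simp
  | cons u t ih =>
    obtain ⟨y, rfl⟩ := h₂ u List.mem_cons_self
    have hlen : L₁.length + L₁.length * t.length = L₁.length * (t.length + 1) := by ring
    rw [List.prod_cons, ← mul_assoc, aux_prod_mul y L₁ h₁, smul_mul_assoc, mul_assoc,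
      ih (fun v hv => h₂ v (List.mem_cons_of_mem _ hv)), mul_smul_comm, smul_smul,
      ← pow_add, List.length_cons, hlen, ← mul_assoc]

private lemma aux_negpow {a b : ℕ} (hab : a % 2 = b % 2) : ((-1 : ℂ)) ^ a = (-1) ^ b := by
  rcases Nat.even_or_odd a with ha | ha
  · have hbb : Even b := Nat.even_iff.2 (by rw [← hab]; exact Nat.even_iff.1 ha)
    rw [ha.neg_one_pow, hbb.neg_one_pow]
  · have hbb : Odd b := Nat.odd_iff.2 (by rw [← hab]; exact Nat.odd_iff.1 ha)
    rw [ha.neg_one_pow, hbb.neg_one_pow]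

end helpers

open ExteriorAlgebra

/-- For a symplectic basis `a_1,…,a_d` of a `d = 2r`-dimensional symplectic space `h`
with dual basis `b_k = a_{k+d/2}` (`k ≤ d/2`), `b_k = −a_{k−d/2}` (`k > d/2`), the
element `Ĉ = Σ_i b_i a_i` of the exterior algebra satisfies
`Ĉ^{d/2} = (−1)^{d(d+2)/8} · 2^{d/2} · (d/2)! · a_1 a_2 ⋯ a_d`. -/
theorem stmt12 (r : ℕ) (hr : 0 < r) (h : Type*) [AddCommGroup h] [Module ℂ h]
    (a : Module.Basis (Fin (2 * r)) ℂ h)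
    (ω : h →ₗ[ℂ] h →ₗ[ℂ] ℂ)                      -- the symplectic form `(−,−)_SF`
    (hskew : ∀ x y : h, ω x y = - ω y x)
    (b : Fin (2 * r) → h)
    (hb : ∀ k : Fin (2 * r), b k =
      if hk : (k : ℕ) < r then a ⟨(k : ℕ) + r, by omega⟩
      else -a ⟨(k : ℕ) - r, by omega⟩)
    (hdual : ∀ i j : Fin (2 * r), ω (a i) (b j) = if i = j then 1 else 0)
    (Chat : ExteriorAlgebra ℂ h)
    (hC : Chat = ∑ i : Fin (2 * r),
      ExteriorAlgebra.ι ℂ (b i) * ExteriorAlgebra.ι ℂ (a i)) :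
    Chat ^ r =
      (((-1 : ℂ) ^ (2 * r * (2 * r + 2) / 8)) * 2 ^ r * (Nat.factorial r : ℂ)) •
        (List.ofFn fun i : Fin (2 * r) => ExteriorAlgebra.ι ℂ (a i)).prod := by
  classical
  set v : ℕ → h := fun k => if hk : k < 2 * r then a ⟨k, hk⟩ else 0 with hv
  set c : ℕ → ExteriorAlgebra ℂ h := fun k => ι ℂ (v (r + k)) * ι ℂ (v k) with hcc
  set g : ℕ → ExteriorAlgebra ℂ h := fun k => if k < r then c k else c (k - r) with hg
  have hva : ∀ i : Fin (2 * r), v (i : ℕ) = a i := by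
    intro i; simp only [hv]; rw [dif_pos i.isLt]
  -- each summand of `Chat` equals `g i`
  have e1 : ∀ i : Fin (2 * r), ι ℂ (b i) * ι ℂ (a i) = g (i : ℕ) := by
    intro i
    by_cases hk : (i : ℕ) < r
    · have h2 : v (r + (i : ℕ)) = b i := by
        rw [hb i, dif_pos hk]
        simp only [hv]
        rw [dif_pos (show r + (i : ℕ) < 2 * r by omega)]
        exact congrArg a (Fin.mk_eq_mk.mpr (by omega))
      simp only [hg, if_pos hk, hcc, h2, hva i]
    · have h3 : v (r + ((i : ℕ) - r)) = a i := by
        simp only [hv]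
        rw [dif_pos (show r + ((i : ℕ) - r) < 2 * r by omega)]
        exact congrArg a (Fin.mk_eq_mk.mpr (by omega))
      have h4 : v ((i : ℕ) - r) = a ⟨(i : ℕ) - r, by omega⟩ := by
        simp only [hv]; rw [dif_pos (show (i : ℕ) - r < 2 * r by omega)]
      rw [hb i, dif_neg hk, map_neg, neg_mul, aux_anticomm, neg_neg]
      simp only [hg, if_neg hk, hcc, h3, h4]
  have hcomm : ∀ i j, Commute (c i) (c j) := fun i j => aux_commute _ _ _ _
  have hsqc : ∀ i, c i * c i = 0 := fun i => aux_sq _ _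
  -- `Chat = 2 • ∑ c`
  have hsum : Chat = (2 : ℂ) • ∑ k ∈ Finset.range r, c k := by
    rw [hC]
    calc ∑ i : Fin (2 * r), ι ℂ (b i) * ι ℂ (a i)
        = ∑ i : Fin (2 * r), g (i : ℕ) := Finset.sum_congr rfl fun i _ => e1 i
      _ = ∑ k ∈ Finset.range (2 * r), g k := Fin.sum_univ_eq_sum_range g (2 * r)
      _ = ∑ k ∈ Finset.range (r + r), g k := by rw [two_mul]
      _ = ∑ k ∈ Finset.range r, g k + ∑ k ∈ Finset.range r, g (r + k) :=
          Finset.sum_range_add g r r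
      _ = ∑ k ∈ Finset.range r, c k + ∑ k ∈ Finset.range r, c k := by
          congr 1
          · exact Finset.sum_congr rfl fun k hk => by
              simp only [hg, if_pos (Finset.mem_range.1 hk)]
          · refine Finset.sum_congr rfl fun k hk => ?_
            have hkr := Finset.mem_range.1 hk
            simp only [hg]
            rw [if_neg (by omega), Nat.add_sub_cancel_left]
      _ = (2 : ℂ) • ∑ k ∈ Finset.range r, c k := (two_smul ℂ _).symm
  -- ordered product with signs
  have hmem : ∀ n : ℕ, ∀ u ∈ (List.range n).map fun k => ι ℂ (v k), ∃ y, u = ι ℂ y := by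
    intro n u hu
    obtain ⟨k, -, rfl⟩ := List.mem_map.1 hu
    exact ⟨_, rfl⟩
  have hmem' : ∀ n : ℕ, ∀ u ∈ (List.range n).map fun k => ι ℂ (v (r + k)), ∃ y, u = ι ℂ y := by
    intro n u hu
    obtain ⟨k, -, rfl⟩ := List.mem_map.1 hu
    exact ⟨_, rfl⟩
  have heven : ∀ m : ℕ, m * (m - 1) % 2 = 0 := by
    intro m
    cases m with
    | zero => rfl
    | succ k =>
      have h1 := Nat.even_mul_succ_self k
      rw [Nat.even_iff] at h1
      have h2 : (k + 1) * (k + 1 - 1) = k * (k + 1) := by simp [Nat.mul_comm]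
      omega
  have hQ : ∀ n, ((List.range n).map c).prod =
      ((-1 : ℂ) ^ (n * (n - 1) / 2)) •
        (((List.range n).map fun k => ι ℂ (v (r + k))).prod *
          ((List.range n).map fun k => ι ℂ (v k)).prod) := by
    intro n
    induction n with
    | zero => simp
    | succ n ih =>
      rw [List.range_succ, List.map_append, List.map_append, List.map_append,
        List.prod_append, List.prod_append, List.prod_append, ih]
      simp only [List.map_cons, List.map_nil, List.prod_cons, List.prod_nil, mul_one]
      rw [hcc]
      rw [smul_mul_assoc, mul_assoc, ← mul_assoc (((List.range n).map fun k => ι ℂ (v k)).prod),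
        aux_prod_mul (v (r + n)) _ (hmem n), List.length_map, List.length_range,
        smul_mul_assoc, mul_smul_comm, smul_smul, ← pow_add]
      have hexp : n * (n - 1) / 2 + n = (n + 1) * (n + 1 - 1) / 2 := by
        have h1 := heven n
        have h2 : n * (n - 1) + 2 * n = (n + 1) * n := by
          cases n with
          | zero => rfl
          | succ k => simp only [Nat.succ_sub_one]; ring
        have h3 : (n + 1) * (n + 1 - 1) = (n + 1) * n := by simp
        omega
      rw [hexp, ← mul_assoc]
      simp only [mul_assoc]
  -- assemble
  rw [hsum, smul_pow, aux_sum_pow_card c hcomm hsqc r, hQ r]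
  -- turn the goal's `ofFn` product into range products
  have hofn : (List.ofFn fun i : Fin (2 * r) => ι ℂ (a i)) =
      (List.range (2 * r)).map fun k => ι ℂ (v k) := by
    rw [List.ofFn_eq_map, ← (show (List.finRange (2 * r)).map Fin.val = List.range (2 * r) from
      List.ext_getElem (by simp) (fun i _ _ => by simp)), List.map_map]
    exact List.map_congr_left fun i _ => by simp [Function.comp, hva i]
  have hTsplit : ((List.range (2 * r)).map fun k => ι ℂ (v k)).prod =
      ((List.range r).map fun k => ι ℂ (v k)).prod *
        ((List.range r).map fun k => ι ℂ (v (r + k))).prod := by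
    rw [two_mul, List.range_add, List.map_append, List.prod_append, List.map_map]
    rfl
  have hswap : (((List.range r).map fun k => ι ℂ (v (r + k))).prod *
        ((List.range r).map fun k => ι ℂ (v k)).prod) =
      ((-1 : ℂ) ^ (r * r)) •
        (((List.range r).map fun k => ι ℂ (v k)).prod *
          ((List.range r).map fun k => ι ℂ (v (r + k))).prod) := by
    rw [aux_prod_prod _ _ (hmem' r) (hmem r)]
    simp
  have hpar : (r * (r - 1) / 2 + r * r) % 2 = 2 * r * (2 * r + 2) / 8 % 2 := by
    have h1 := heven r
    have h2 : r * (r - 1) + r = r * r := by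
      cases r with
      | zero => rfl
      | succ k => simp only [Nat.succ_sub_one]; ring
    have h3 : 2 * r * (2 * r + 2) = 4 * (r * r) + 4 * r := by ring
    omega
  have hsc : ((-1 : ℂ)) ^ (r * (r - 1) / 2) * (-1) ^ (r * r) =
      (-1) ^ (2 * r * (2 * r + 2) / 8) := by
    rw [← pow_add]; exact aux_negpow hpar
  rw [hswap, hofn, hTsplit, ← Nat.cast_smul_eq_nsmul ℂ,
    smul_smul, smul_smul, smul_smul]
  congr 1
  rw [← hsc]
  ring
end

section
/- Let Z(τ) = Σ_{i=1}^4 z_i χ_i(τ) with z_i ∈ ℂ, where under the modular S-transformation the characters transform as: χ_1(−1/τ) = 2^{−d/2−1}(χ_3−χ_4) + (1/2)(−iτ)^{d/2}(χ_1−χ_2), χ_2(−1/τ) = 2^{−d/2−1}(χ_3−χ_4) − (1/2)(−iτ)^{d/2}(χ_1−χ_2), χ_3(−1/τ) = (1/2)(χ_3+χ_4) + 2^{d/2−1}(χ_1+χ_2), χ_4(−1/τ) = (1/2)(χ_3+χ_4) − 2^{d/2−1}(χ_1+χ_2). Treating χ_1,...,χ_4 and (−iτ)^{d/2}χ_1,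 (−iτ)^{d/2}χ_2 as linearly independent functions, the space of coefficient vectors (z_1,z_2,z_3,z_4) for which Z(−1/τ) = ξ Z(τ) for some scalar ξ is spanned by (0,0,1,1) and (2^{d/2−1}, 2^{d/2−1}, 1, 0) for ξ = 1, and by (2^{d/2}, 2^{d/2}, −1, 1) for ξ = −1. -/
/-- Classification of projectively S-invariant combinations of symplectic fermion
characters.  Model the characters `χ_1,…,χ_4` and the extra functions
`ψ_1 = (−iτ)^{d/2}χ_1, ψ_2 = (−iτ)^{d/2}χ_2` as linearly independent vectors in a
complex vector space `F`, with the S-transformed characters `Sχ_i` given by the stated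
formulas (`d = 2e`).  Then `Σ z_i Sχ_i = ξ · Σ z_i χ_i` holds with `ξ = 1` exactly for
`z` in the span of `(0,0,1,1)` and `(2^{d/2−1}, 2^{d/2−1}, 1, 0)`, and with `ξ = −1`
exactly for `z` in the span of `(2^{d/2}, 2^{d/2}, −1, 1)`. -/
theorem stmt14 (e : ℕ) (he : 0 < e)
    (F : Type*) [AddCommGroup F] [Module ℂ F]
    (χ : Fin 4 → F) (ψ : Fin 2 → F)
    (hind : LinearIndependent ℂ (Sum.elim χ ψ))
    (Sχ : Fin 4 → F)
    (hS0 : Sχ 0 = ((2 : ℂ) ^ (-(e : ℤ) - 1)) • (χ 2 - χ 3)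
        + ((1 : ℂ) / 2) • (ψ 0 - ψ 1))
    (hS1 : Sχ 1 = ((2 : ℂ) ^ (-(e : ℤ) - 1)) • (χ 2 - χ 3)
        - ((1 : ℂ) / 2) • (ψ 0 - ψ 1))
    (hS2 : Sχ 2 = ((1 : ℂ) / 2) • (χ 2 + χ 3)
        + ((2 : ℂ) ^ ((e : ℤ) - 1)) • (χ 0 + χ 1))
    (hS3 : Sχ 3 = ((1 : ℂ) / 2) • (χ 2 + χ 3)
        - ((2 : ℂ) ^ ((e : ℤ) - 1)) • (χ 0 + χ 1))
    (z : Fin 4 → ℂ) :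
    ((∑ i, z i • Sχ i = ∑ i, z i • χ i) ↔
      z ∈ Submodule.span ℂ
        ({![0, 0, 1, 1],
          ![(2 : ℂ) ^ ((e : ℤ) - 1), (2 : ℂ) ^ ((e : ℤ) - 1), 1, 0]} :
          Set (Fin 4 → ℂ))) ∧
    ((∑ i, z i • Sχ i = -∑ i, z i • χ i) ↔
      z ∈ Submodule.span ℂ
        ({![(2 : ℂ) ^ (e : ℤ), (2 : ℂ) ^ (e : ℤ), -1, 1]} : Set (Fin 4 → ℂ))) := by
  have hli := Fintype.linearIndependent_iff.mp hind
  set p : ℂ := (2:ℂ)^((e:ℤ)-1) with hp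
  set q : ℂ := (2:ℂ)^(-(e:ℤ)-1) with hq
  have h2 : (2:ℂ) ≠ 0 := by norm_num
  have hpq : p * q = 1/4 := by
    rw [hp, hq, ← zpow_add₀ h2]
    have : ((e:ℤ) - 1) + (-(e:ℤ) - 1) = -2 := by ring
    rw [this]
    norm_num
  have h2e : (2:ℂ)^(e:ℤ) = 2 * p := by
    rw [hp, ← zpow_one_add₀ h2]
    ring_nf
  have key : ∀ a : Fin 4 → ℂ, ∀ b : Fin 2 → ℂ,
      (∑ i, a i • χ i) + (∑ j, b j • ψ j) = 0 →
      (∀ i, a i = 0) ∧ (∀ j, b j = 0) := by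
    intro a b h
    have h0 := hli (Sum.elim a b) (by
      rw [Fintype.sum_sum_type]
      simpa using h)
    exact ⟨fun i => h0 (Sum.inl i), fun j => h0 (Sum.inr j)⟩
  constructor
  · constructor
    · intro h
      have h' : (∑ i, (![p * (z 2 - z 3) - z 0, p * (z 2 - z 3) - z 1,
            q * (z 0 + z 1) + (z 2 + z 3)/2 - z 2,
            -(q * (z 0 + z 1)) + (z 2 + z 3)/2 - z 3] : Fin 4 → ℂ) i • χ i)
          + (∑ j, (![(z 0 - z 1)/2, -((z 0 - z 1)/2)] : Fin 2 → ℂ) j • ψ j) = 0 := by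
        have heq : (∑ i, (![p * (z 2 - z 3) - z 0, p * (z 2 - z 3) - z 1,
            q * (z 0 + z 1) + (z 2 + z 3)/2 - z 2,
            -(q * (z 0 + z 1)) + (z 2 + z 3)/2 - z 3] : Fin 4 → ℂ) i • χ i)
          + (∑ j, (![(z 0 - z 1)/2, -((z 0 - z 1)/2)] : Fin 2 → ℂ) j • ψ j)
            = (∑ i, z i • Sχ i) - (∑ i, z i • χ i) := by
          simp only [Fin.sum_univ_four, Fin.sum_univ_two, hS0, hS1, hS2, hS3,
            Matrix.cons_val_zero, Matrix.cons_val_one, Matrix.head_cons,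
            Matrix.cons_val_two, Matrix.tail_cons, Matrix.cons_val_three]
          module
        rw [heq, h, sub_self]
      obtain ⟨ha, hb⟩ := key _ _ h'
      have e0 := ha 0; have e1 := ha 1
      have f0 := hb 0
      simp only [Matrix.cons_val_zero, Matrix.cons_val_one, Matrix.head_cons] at e0 e1 f0
      refine Submodule.mem_span_pair.mpr ⟨z 3, z 2 - z 3, ?_⟩
      funext i
      fin_cases i <;> simp <;>
        first
          | ring1
          | linear_combination e0
          | linear_combination -e0
          | linear_combination e1
          | linear_combination -e1
          | linear_combination e1 - 2 * f0
          | linear_combination e1 + 2 * f0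
          | linear_combination -e1 + 2 * f0
          | linear_combination -e1 - 2 * f0
    · intro hz
      obtain ⟨a, b, hab⟩ := Submodule.mem_span_pair.mp hz
      subst hab
      simp only [Fin.sum_univ_four, hS0, hS1, hS2, hS3, Pi.add_apply, Pi.smul_apply,
        Matrix.cons_val_zero, Matrix.cons_val_one, Matrix.head_cons,
        Matrix.cons_val_two, Matrix.tail_cons, Matrix.cons_val_three, smul_eq_mul]
      match_scalars <;>
        first
          | ring1
          | linear_combination (2*b) * hpq
          | linear_combination (-2*b) * hpq
  · constructor
    · intro h
      have h' : (∑ i, (![p * (z 2 - z 3) + z 0, p * (z 2 - z 3) + z 1,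
            q * (z 0 + z 1) + (z 2 + z 3)/2 + z 2,
            -(q * (z 0 + z 1)) + (z 2 + z 3)/2 + z 3] : Fin 4 → ℂ) i • χ i)
          + (∑ j, (![(z 0 - z 1)/2, -((z 0 - z 1)/2)] : Fin 2 → ℂ) j • ψ j) = 0 := by
        have heq : (∑ i, (![p * (z 2 - z 3) + z 0, p * (z 2 - z 3) + z 1,
            q * (z 0 + z 1) + (z 2 + z 3)/2 + z 2,
            -(q * (z 0 + z 1)) + (z 2 + z 3)/2 + z 3] : Fin 4 → ℂ) i • χ i)
          + (∑ j, (![(z 0 - z 1)/2, -((z 0 - z 1)/2)] : Fin 2 → ℂ) j • ψ j)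
            = (∑ i, z i • Sχ i) - (-∑ i, z i • χ i) := by
          simp only [Fin.sum_univ_four, Fin.sum_univ_two, hS0, hS1, hS2, hS3,
            Matrix.cons_val_zero, Matrix.cons_val_one, Matrix.head_cons,
            Matrix.cons_val_two, Matrix.tail_cons, Matrix.cons_val_three]
          module
        rw [heq, h, sub_self]
      obtain ⟨ha, hb⟩ := key _ _ h'
      have e0 := ha 0; have e1 := ha 1; have e2 := ha 2; have e3 := ha 3
      have f0 := hb 0
      simp only [Matrix.cons_val_zero, Matrix.cons_val_one, Matrix.head_cons,
        Matrix.cons_val_two, Matrix.tail_cons, Matrix.cons_val_three] at e0 e1 e2 e3 f0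
      have h23 : z 3 = -z 2 := by linear_combination (e2 + e3)/2
      refine Submodule.mem_span_singleton.mpr ⟨-z 2, ?_⟩
      funext i
      fin_cases i <;> simp [h2e] <;>
        first
          | ring1
          | linear_combination h23
          | linear_combination -h23
          | linear_combination e1 + p * h23
          | linear_combination -e1 - p * h23
          | linear_combination e0 + p * h23
          | linear_combination -e0 - p * h23
          | linear_combination e1 + p * h23 - 2 * f0
          | linear_combination e1 + p * h23 + 2 * f0
          | linear_combination -e1 - p * h23 + 2 * f0
          | linear_combination -e1 - p * h23 - 2 * f0
    · intro hz
      obtain ⟨c, hab⟩ := Submodule.mem_span_singleton.mp hz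
      subst hab
      simp only [Fin.sum_univ_four, hS0, hS1, hS2, hS3, Pi.smul_apply,
        Matrix.cons_val_zero, Matrix.cons_val_one, Matrix.head_cons,
        Matrix.cons_val_two, Matrix.tail_cons, Matrix.cons_val_three, smul_eq_mul, h2e]
      match_scalars <;>
        first
          | ring1
          | linear_combination (4*c) * hpq
          | linear_combination (-4*c) * hpq
end

section
/- Let h be a purely odd complex super-vector space with super-symmetric non-degenerate pairing, S(h) its symmetric algebra in super-vector spaces (equal to the exterior algebra of the underlying space), which is a commutative cocommutative Hopf super-algebra with Δ(a) = a⊗1 + 1⊗a and S(a) = −a for a ∈ h. Fix a basis a_1,...,a_d with ψ ∈ S(h)* supported only on the monomial a_1⋯a_{d/2} (d even), and let m = a_{d/2+1}⋯a_d. Then for every g ∈ S(h), Σ_{(g)} g'·m · ψ(g'') = m · ψ(g), where Δ(g) = Σ_{(g)} g'⊗g'' is Sweedler notation and g'·m denotes the product in S(h). -/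
/-!
Only the summand with `g'' = a_1⋯a_{d/2}` survives `ψ`. If `g` is that monomial, the summand
is the one with `g' = 1`, which gives `m ψ(g)`. Otherwise `ψ(g) = 0`, and a surviving `g'` is a
nonempty monomial in generators `a_i` with `i > d/2`, all of which occur in `m`, so `g' m = 0`.
-/

open ExteriorAlgebra

namespace ExteriorAlgebra

variable (R : Type*) {M : Type*} [CommRing R] [AddCommGroup M] [Module R M]

theorem list_prod_map_ι_eq_zero_of_not_nodup {l : List M} (hl : ¬ l.Nodup) :
    (l.map (ι R)).prod = 0 := by
  have hget : ¬ Function.Injective l.get := fun h => hl (List.nodup_iff_injective_get.mpr h)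
  rw [← (ιMulti R _).map_eq_zero_of_not_injective _ hget, ιMulti_apply]
  conv_lhs => rw [← List.ofFn_get l, List.map_ofFn]
  rfl

variable {κ : Type*} [LinearOrder κ]

def sortedMonomial (v : κ → M) (S : Finset κ) : ExteriorAlgebra R M :=
  ((S.sort (· ≤ ·)).map fun i => ι R (v i)).prod

@[simp]
theorem sortedMonomial_empty (v : κ → M) : sortedMonomial R v ∅ = 1 := by
  simp [sortedMonomial]

theorem sortedMonomial_mul_eq_zero_of_not_disjoint (v : κ → M) {S T : Finset κ}
    (hST : ¬ Disjoint S T) : sortedMonomial R v S * sortedMonomial R v T = 0 := by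
  obtain ⟨j, hjS, hjT⟩ := Finset.not_disjoint_iff.mp hST
  have hdup : ¬ ((S.sort (· ≤ ·) ++ T.sort (· ≤ ·)).map v).Nodup := fun h =>
    List.disjoint_of_nodup_append (h.of_map v) ((Finset.mem_sort _).mpr hjS)
      ((Finset.mem_sort _).mpr hjT)
  rw [sortedMonomial, sortedMonomial, ← List.prod_append, ← List.map_append,
    ← list_prod_map_ι_eq_zero_of_not_nodup R hdup, List.map_map]
  rfl

end ExteriorAlgebra

theorem stmt15_general (r : ℕ) (V : Type*) [AddCommGroup V] [Module ℂ V]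
    (a : Module.Basis (Fin (2 * r)) ℂ V)
    (mono : Finset (Fin (2 * r)) → ExteriorAlgebra ℂ V)
    (hmono : ∀ I, mono I =
      ((I.sort (· ≤ ·)).map fun i => ExteriorAlgebra.ι ℂ (a i)).prod)
    (ψ : ExteriorAlgebra ℂ V →ₗ[ℂ] ℂ)
    (hψ : ∀ I : Finset (Fin (2 * r)),
      I ≠ Finset.univ.filter (fun i : Fin (2 * r) => (i : ℕ) < r) → ψ (mono I) = 0)
    (m : ExteriorAlgebra ℂ V)
    (hm : m = mono (Finset.univ.filter fun i => r ≤ (i : ℕ)))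
    (sgn : Finset (Fin (2 * r)) → Finset (Fin (2 * r)) → ℂ)
    (hsgn : ∀ I S, S ⊆ I → mono S * mono (I \ S) = sgn I S • mono I)
    (I : Finset (Fin (2 * r))) :
    ∑ S ∈ I.powerset, sgn I S • (ψ (mono (I \ S)) • (mono S * m))
      = ψ (mono I) • m := by
  obtain rfl : mono = sortedMonomial ℂ a := funext fun I => (hmono I).trans rfl
  set L := Finset.univ.filter fun i : Fin (2 * r) => (i : ℕ) < r
  have hmul_m : ∀ S, ¬ S ⊆ L → sortedMonomial ℂ a S * m = 0 := fun S hS => by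
    obtain ⟨j, hjS, hjL⟩ := Finset.not_subset.mp hS
    rw [hm]
    refine sortedMonomial_mul_eq_zero_of_not_disjoint ℂ a
      (Finset.not_disjoint_iff.mpr ⟨j, hjS, ?_⟩)
    simpa [L] using hjL
  by_cases hIL : I = L
  · rw [Finset.sum_eq_single_of_mem ∅ (Finset.empty_mem_powerset I) fun S hS hS₀ => ?_]
    · have hψsgn : sgn I ∅ * ψ (sortedMonomial ℂ a I) = ψ (sortedMonomial ℂ a I) := by
        simpa using congrArg ψ (hsgn I ∅ (Finset.empty_subset I)).symm
      rw [Finset.sdiff_empty, sortedMonomial_empty, one_mul, smul_smul, hψsgn]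
    · have hdiff : I \ S ≠ L := fun h => hS₀ <| (Finset.disjoint_self_iff_empty _).mp
        (Finset.subset_sdiff.mp ((Finset.mem_powerset.mp hS).trans (h.trans hIL.symm).ge)).2
      rw [hψ _ hdiff, zero_smul, smul_zero]
  · rw [hψ I hIL, zero_smul]
    refine Finset.sum_eq_zero fun S _ => ?_
    by_cases hdiff : I \ S = L
    · have hSL : ¬ S ⊆ L := fun h => hIL <| by
        obtain rfl : S = ∅ := (Finset.disjoint_self_iff_empty _).mp
          (Finset.subset_sdiff.mp (h.trans hdiff.ge)).2
        simpa using hdiff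
      rw [hmul_m S hSL, smul_zero, smul_zero]
    · rw [hψ _ hdiff, zero_smul, smul_zero]

/-- In the exterior (super-symmetric) algebra `S(h) = Λ(h)` of a `d = 2r`-dimensional
space with basis `a_0,…,a_{d-1}`, regarded as a Hopf algebra in super-vector spaces,
let `ψ` be a linear functional supported only on the monomial `a_0⋯a_{r-1}` and let
`m = a_r⋯a_{d-1}`.  Then for every monomial `g = mono I`, the Sweedler-type identity
`Σ_{(g)} g'·m·ψ(g'') = m·ψ(g)` holds, where the coproduct of a monomial is
`Δ(mono I) = Σ_{S ⊆ I} sgn(I,S)· mono S ⊗ mono (I∖S)` with the Koszul sign `sgn(I,S)`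
determined by `mono S · mono (I∖S) = sgn(I,S) · mono I`. -/
theorem stmt15 (r : ℕ) (hr : 0 < r) (V : Type*) [AddCommGroup V] [Module ℂ V]
    (a : Module.Basis (Fin (2 * r)) ℂ V)
    (mono : Finset (Fin (2 * r)) → ExteriorAlgebra ℂ V)
    (hmono : ∀ I, mono I =
      ((I.sort (· ≤ ·)).map fun i => ExteriorAlgebra.ι ℂ (a i)).prod)
    (ψ : ExteriorAlgebra ℂ V →ₗ[ℂ] ℂ)
    (hψ : ∀ I : Finset (Fin (2 * r)),
      I ≠ Finset.univ.filter (fun i : Fin (2 * r) => (i : ℕ) < r) → ψ (mono I) = 0)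
    (m : ExteriorAlgebra ℂ V)
    (hm : m = mono (Finset.univ.filter fun i => r ≤ (i : ℕ)))
    (sgn : Finset (Fin (2 * r)) → Finset (Fin (2 * r)) → ℂ)
    (hsgn : ∀ I S, S ⊆ I → mono S * mono (I \ S) = sgn I S • mono I)
    (I : Finset (Fin (2 * r))) :
    ∑ S ∈ I.powerset, sgn I S • (ψ (mono (I \ S)) • (mono S * m))
      = ψ (mono I) • m :=
  stmt15_general r V a mono hmono ψ hψ m hm sgn hsgn I
end

section
/- Let C be a finite tensor category over a field of characteristic zero in which the unit object 1 is the unique simple object up to isomorphism and Ext¹(1,1) = 0. Then every object of C is isomorphic to a finite direct sum of copies of 1; hence C is equivalent to the category of finite-dimensional vector spaces. -/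
open CategoryTheory MonoidalCategory CategoryTheory.Limits

/-!
The dual `Yᘁ` of a nonzero object `Y` is nonzero, so (being artinian) it contains a simple
subobject, necessarily `≅ 𝟙`; transposing `𝟙 ⟶ Yᘁ` gives a nonzero, hence epic, map `Y ⟶ 𝟙`.
Its kernel is a proper subobject, so by well-founded induction on subobjects it is `𝟙ⁿ`.
Since `Ext¹(𝟙, -)` vanishes on `𝟙` and commutes with finite sums (push an extension out along
each projection), the extension `0 → 𝟙ⁿ → Y → 𝟙 → 0` splits and `Y ≅ 𝟙ⁿ⁺¹`.
-/

section Biproduct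

variable {C : Type*} [Category C] [Preadditive C] [HasFiniteBiproducts C]

attribute [local instance] hasBinaryBiproducts_of_finite_biproducts

noncomputable def biproductFinSuccIso (n : ℕ) (U : C) :
    ((⨁ fun _ : Fin n => U) ⊞ U) ≅ ⨁ fun _ : Fin (n + 1) => U where
  hom := biprod.desc (biproduct.desc fun j => biproduct.ι (fun _ : Fin (n + 1) => U) j.castSucc)
    (biproduct.ι (fun _ : Fin (n + 1) => U) (Fin.last n))
  inv := biproduct.desc fun j => Fin.lastCases biprod.inr
    (fun i => biproduct.ι (fun _ : Fin n => U) i ≫ biprod.inl) j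
  hom_inv_id := by ext j i <;> simp [Fin.lastCases_castSucc]
  inv_hom_id := by
    ext j i
    rcases Fin.eq_castSucc_or_eq_last j with ⟨j, rfl⟩ | rfl <;>
    rcases Fin.eq_castSucc_or_eq_last i with ⟨i, rfl⟩ | rfl <;>
      simp [Fin.lastCases_castSucc, biproduct.ι_π, Fin.castSucc_inj]

end Biproduct

section Extensions

variable {C : Type*} [Category C] [Abelian C]

/-- `Ext¹(B, A) = 0`, phrased without derived functors. -/
def ExtensionsSplit (A B : C) : Prop :=
  ∀ (E : C) (i : A ⟶ E) (p : E ⟶ B) (w : i ≫ p = 0),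
    Mono i → Epi p → (ShortComplex.mk i p w).Exact → ∃ s : B ⟶ E, s ≫ p = 𝟙 B

lemma CategoryTheory.ShortComplex.ShortExact.pushout {S : ShortComplex C} (hS : S.ShortExact)
    {A' : C} (g : S.X₁ ⟶ A') :
    (ShortComplex.mk (Limits.pushout.inr S.f g) (Limits.pushout.desc S.g 0 (by simp))
      (Limits.pushout.inr_desc _ _ _)).ShortExact := by
  have := hS.mono_f
  have := hS.epi_g
  have hcok : IsColimit (CokernelCofork.ofπ S.g S.zero) := hS.exact.gIsCokernel
  have : Epi (Limits.pushout.desc S.g 0 (by simp) : Limits.pushout S.f g ⟶ S.X₃) :=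
    epi_of_epi_fac (Limits.pushout.inl_desc _ _ _)
  refine { exact := ShortComplex.exact_of_g_is_cokernel _ <|
    CokernelCofork.IsColimit.ofπ' _ _ fun t ht => ⟨hcok.desc (CokernelCofork.ofπ
      (Limits.pushout.inl S.f g ≫ t) (by rw [Limits.pushout.condition_assoc, ht, comp_zero])), ?_⟩ }
  apply Limits.pushout.hom_ext
  · rw [Limits.pushout.inl_desc_assoc]
    exact hcok.fac _ WalkingParallelPair.one
  · rw [Limits.pushout.inr_desc_assoc, zero_comp, ht]

lemma ExtensionsSplit.exists_comp_eq {S : ShortComplex C} {A' : C}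
    (h : ExtensionsSplit A' S.X₃) (hS : S.ShortExact) (g : S.X₁ ⟶ A') :
    ∃ r : S.X₂ ⟶ A', S.f ≫ r = g := by
  have hP := hS.pushout g
  obtain ⟨s, hs⟩ := h _ _ _ _ hP.mono_f hP.epi_g hP.exact
  have hsplit := ShortComplex.Splitting.ofExactOfSection _ hP.exact s hs hP.mono_f
  refine ⟨Limits.pushout.inl S.f g ≫ hsplit.r, ?_⟩
  rw [Limits.pushout.condition_assoc]
  exact (congrArg (g ≫ ·) hsplit.f_r).trans (Category.comp_id g)

lemma ExtensionsSplit.of_iso_biproduct {ι : Type*} {f : ι → C} [HasBiproduct f] {A B : C}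
    (e : A ≅ ⨁ f) (h : ∀ j, ExtensionsSplit (f j) B) : ExtensionsSplit A B := by
  intro E i p w _ _ hx
  choose r hr using fun j =>
    (h j).exists_comp_eq (S := ShortComplex.mk i p w) ⟨hx⟩ (e.hom ≫ biproduct.π f j)
  have hi : i ≫ biproduct.lift r ≫ e.inv = 𝟙 A := by
    rw [← Category.assoc, e.comp_inv_eq, Category.id_comp]
    ext j
    simp [hr]
  exact ⟨_, (ShortComplex.Splitting.ofExactOfRetraction _ hx _ hi inferInstance).s_g⟩

lemma ExtensionsSplit.nonempty_iso_biprod {S : ShortComplex C}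
    (h : ExtensionsSplit S.X₁ S.X₃) (hS : S.ShortExact) : Nonempty (S.X₂ ≅ S.X₁ ⊞ S.X₃) := by
  obtain ⟨s, hs⟩ := h _ _ _ _ hS.mono_f hS.epi_g hS.exact
  exact ⟨(ShortComplex.Splitting.ofExactOfSection _ hS.exact s hs hS.mono_f).isoBinaryBiproduct⟩

end Extensions

section RigidDual

variable {C : Type*} [Category C] [Preadditive C] [MonoidalCategory C] [MonoidalPreadditive C]

lemma not_isZero_rightDual {Y : C} [HasRightDual Y] (hY : ¬IsZero Y) : ¬IsZero Yᘁ := by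
  intro hz
  have hl : (λ_ Y).hom = 0 := (tensorRightHomEquiv (𝟙_ C) Y Yᘁ Y).injective <|
    ((tensorLeft Y).map_isZero hz).eq_of_tgt _ _
  exact hY <| (IsZero.iff_id_eq_zero Y).2 <| by
    rw [← (λ_ Y).inv_hom_id, hl, comp_zero]

noncomputable def homUnitEquivUnitHomRightDual (Y : C) [HasRightDual Y] :
    (Y ⟶ 𝟙_ C) ≃ (𝟙_ C ⟶ Yᘁ) :=
  ((λ_ Y).homCongr (Iso.refl _)).symm.trans
    ((tensorRightHomEquiv _ _ _ _).trans ((Iso.refl _).homCongr (λ_ _)))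

@[simp]
lemma homUnitEquivUnitHomRightDual_zero (Y : C) [HasRightDual Y] :
    homUnitEquivUnitHomRightDual Y 0 = 0 := by
  simp [homUnitEquivUnitHomRightDual, tensorRightHomEquiv]

end RigidDual

section UniqueSimple

variable {C : Type*} [Category C] [Abelian C] [MonoidalCategory C] [MonoidalPreadditive C]
  [Simple (𝟙_ C)]

lemma exists_epi_unit_of_not_isZero (huniq : ∀ S : C, Simple S → Nonempty (S ≅ 𝟙_ C))
    {Y : C} [HasRightDual Y] [IsArtinianObject Yᘁ] (hY : ¬IsZero Y) :
    ∃ f : Y ⟶ 𝟙_ C, Epi f := by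
  obtain ⟨S, hS⟩ := exists_simple_subobject (not_isZero_rightDual hY)
  obtain ⟨e⟩ := huniq _ hS
  have hg : e.inv ≫ S.arrow ≠ 0 := fun h =>
    Simple.not_isZero (𝟙_ C) (IsZero.of_mono_eq_zero _ h)
  refine ⟨(homUnitEquivUnitHomRightDual Y).symm (e.inv ≫ S.arrow), epi_of_nonzero_to_simple ?_⟩
  intro hf
  apply hg
  rw [← (homUnitEquivUnitHomRightDual Y).apply_symm_apply (e.inv ≫ S.arrow), hf,
    homUnitEquivUnitHomRightDual_zero]

end UniqueSimple

lemma CategoryTheory.IsArtinianObject.induction {C : Type*} [Category C] {P : C → Prop}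
    (hP : ∀ {X Y : C}, (X ≅ Y) → P X → P Y)
    (step : ∀ X : C, (∀ (Y : C) (f : Y ⟶ X), Mono f → ¬IsIso f → P Y) → P X)
    (X : C) [IsArtinianObject X] : P X := by
  suffices ∀ S : Subobject X, P S from hP (asIso (⊤ : Subobject X).arrow) (this ⊤)
  intro S
  induction S using WellFoundedLT.induction with
  | _ S ih =>
    refine step _ fun Y f _ hf => hP (Subobject.underlyingIso (f ≫ S.arrow)) (ih _ ?_)
    conv_rhs => rw [← Subobject.mk_arrow S]
    exact Subobject.mk_lt_mk_of_comm f rfl hf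

/-- Let `C` be a finite tensor category over a field `k` of characteristic zero
(abelian, `k`-linear monoidal, rigid, finite-dimensional Homs, all objects noetherian
and artinian) in which the unit `𝟙_C` is simple and is the unique simple object up to
isomorphism, and in which `Ext¹(𝟙,𝟙) = 0` (every short exact sequence
`0 → 𝟙 → E → 𝟙 → 0` splits).  Then every object of `C` is isomorphic to a finite
direct sum of copies of `𝟙_C`. -/
theorem stmt16 {k : Type*} [Field k] [CharZero k]
    {C : Type*} [Category C] [Abelian C] [Linear k C] [MonoidalCategory C]
    [RigidCategory C] [MonoidalPreadditive C] [MonoidalLinear k C]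
    [∀ X Y : C, FiniteDimensional k (X ⟶ Y)] [HasFiniteBiproducts C]
    (hnoeth : ∀ X : C, IsNoetherianObject X)
    (hart : ∀ X : C, IsArtinianObject X)
    (hsimpleUnit : Simple (𝟙_ C))
    (huniq : ∀ S : C, Simple S → Nonempty (S ≅ 𝟙_ C))
    (hext : ∀ (E : C) (i : 𝟙_ C ⟶ E) (p : E ⟶ 𝟙_ C) (w : i ≫ p = 0),
      Mono i → Epi p → (ShortComplex.mk i p w).Exact →
        ∃ s : 𝟙_ C ⟶ E, s ≫ p = 𝟙 (𝟙_ C)) :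
    ∀ X : C, ∃ n : ℕ, Nonempty (X ≅ ⨁ fun _ : Fin n => 𝟙_ C) := by
  intro X
  have := hart X
  refine IsArtinianObject.induction (P := fun Y => ∃ n : ℕ, Nonempty (Y ≅ ⨁ fun _ : Fin n => 𝟙_ C))
    (fun e ⟨n, ⟨e'⟩⟩ => ⟨n, ⟨e.symm ≪≫ e'⟩⟩) (fun Y ih => ?_) X
  by_cases hY : IsZero Y
  · exact ⟨0, ⟨hY.iso <| (IsZero.iff_id_eq_zero _).2 <| biproduct.hom_ext _ _ (·.elim0)⟩⟩
  have := hart Yᘁ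
  obtain ⟨f, hf⟩ := exists_epi_unit_of_not_isZero huniq hY
  have hker : ¬IsIso (kernel.ι f) := fun _ =>
    Simple.not_isZero (𝟙_ C) <| IsZero.of_epi_eq_zero f <| by
      rw [← cancel_epi (kernel.ι f), kernel.condition, comp_zero]
  obtain ⟨n, ⟨e⟩⟩ := ih _ (kernel.ι f) inferInstance hker
  have hS : (ShortComplex.kernelSequence f).ShortExact :=
    { exact := ShortComplex.kernelSequence_exact f, epi_g := hf }
  obtain ⟨e'⟩ := (ExtensionsSplit.of_iso_biproduct e fun _ => hext).nonempty_iso_biprod hS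
  exact ⟨n + 1, ⟨e' ≪≫ biprod.mapIso e (Iso.refl _) ≪≫ biproductFinSuccIso n (𝟙_ C)⟩⟩
end
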